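/- arXiv:2407.06776 — 5 statements merged into one kernel-verified Lean document; each statement's English description precedes it below -/
import Mathlib

section
/- Under the standing assumption, the solution φ(x,·) of the ODE φ(x,0) = x, ∂_tφ(x,t) = u(φ(x,t),t) exists for all t ≥ 0 and satisfies |φ(x,t)| ≤ |x| for all t ≥ 0. -/
open Real Set Filter
open scoped ContDiff NNReal Topology

lemma key_sign
    (u : ℝ → ℝ → ℝ)
    (hu_smooth : ContDiff ℝ (⊤ : ℕ∞) (fun p : ℝ × ℝ => u p.1 p.2))
    (hu_odd : ∀ y t : ℝ, u (-y) t = -u y t)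
    (hbdd : ∀ t : ℝ, BddAbove (Set.range fun y => |iteratedDeriv 3 (fun z => u z t) y|))
    (x : ℝ)
    (hstanding : ∀ t : ℝ, 0 ≤ t →
      x ^ 2 * (⨆ y : ℝ, |iteratedDeriv 3 (fun z => u z t) y|) ≤ -(deriv (fun z => u z t) 0)) :
    ∀ t : ℝ, 0 ≤ t → ∀ y : ℝ, |y| ≤ |x| → y * u y t ≤ 0 := by
  intro t ht
  set h : ℝ → ℝ := fun z => u z t with hh
  have hch : ContDiff ℝ ∞ h := (hu_smooth.of_le (by simp)).comp (contDiff_id.prodMk contDiff_const)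
  have hodd : ∀ y, h (-y) = - h y := fun y => hu_odd y t
  set M : ℝ := ⨆ y : ℝ, |iteratedDeriv 3 h y| with hMdef
  have hM : ∀ y, |iteratedDeriv 3 h y| ≤ M := fun y => le_ciSup (hbdd t) y
  have hM0 : (0:ℝ) ≤ M := (abs_nonneg _).trans (hM 0)
  have h0 : h 0 = 0 := by have := hodd 0; simp at this; linarith
  -- smoothness of iterated derivatives
  have hsm : ∀ n : ℕ, ContDiff ℝ ∞ (iteratedDeriv n h) := by
    intro n; rw [iteratedDeriv_eq_iterate]; exact hch.iterate_deriv n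
  have hder : ∀ n : ℕ, ∀ y : ℝ,
      HasDerivAt (iteratedDeriv n h) (iteratedDeriv (n+1) h y) y := by
    intro n y
    have := ((hsm n).differentiable (by norm_num) y).hasDerivAt
    rwa [iteratedDeriv_succ, ← derivWithin_univ, derivWithin_univ]
  -- h'' 0 = 0
  have hfun : h = fun y => -h (-y) := by
    funext y; rw [hodd y]; ring
  have h2 : iteratedDeriv 2 h 0 = 0 := by
    have e1 : iteratedDeriv 2 h 0 = iteratedDeriv 2 (fun y => -h (-y)) 0 := by
      conv_lhs => rw [hfun]
    rw [iteratedDeriv_fun_neg, iteratedDeriv_comp_neg] at e1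
    simp at e1
    linarith
  set d1 : ℝ := deriv h 0 with hd1
  have hd1' : x ^ 2 * M ≤ -d1 := hstanding t ht
  have hd1neg : d1 ≤ 0 := by nlinarith [sq_nonneg x]
  -- cubic remainder bound on [0, b]
  have cubic : ∀ b : ℝ, 0 ≤ b → ∀ y ∈ Icc (0:ℝ) b, |h y - d1 * y| ≤ M * y^3 / 6 := by
    intro b hb
    -- step A : |h'' y| ≤ M y
    have stepA : ∀ y ∈ Icc (0:ℝ) b, |iteratedDeriv 2 h y| ≤ M * y := by
      have := image_norm_le_of_norm_deriv_right_le_deriv_boundary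
        (f := iteratedDeriv 2 h) (f' := iteratedDeriv 3 h) (a := 0) (b := b)
        ((hsm 2).continuous.continuousOn)
        (fun y _ => (hder 2 y).hasDerivWithinAt)
        (B := fun y => M * y) (B' := fun _ => M)
        (by simp [h2])
        (fun y => by simpa using (hasDerivAt_id y).const_mul M)
        (fun y _ => hM y)
      intro y hy; simpa using this hy
    -- step B : |h' y - h' 0| ≤ M y^2 / 2
    have stepB : ∀ y ∈ Icc (0:ℝ) b, |deriv h y - d1| ≤ M * y^2 / 2 := by
      have hder1 : ∀ y : ℝ, HasDerivAt (fun z => deriv h z - d1) (iteratedDeriv 2 h y) y := by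
        intro y
        have := hder 1 y
        rw [iteratedDeriv_one] at this
        simpa using this.sub_const d1
      have hBder : ∀ y : ℝ, HasDerivAt (fun z : ℝ => M * z^2 / 2) (M * y) y := by
        intro y
        have : HasDerivAt (fun z : ℝ => M * z^2 / 2) (M * (2 * y) / 2) y := by
          exact (((hasDerivAt_pow 2 y).const_mul M).div_const 2).congr_deriv (by ring)
        simpa using this.congr_deriv (by ring)
      have := image_norm_le_of_norm_deriv_right_le_deriv_boundary
        (f := fun z => deriv h z - d1) (f' := iteratedDeriv 2 h) (a := 0) (b := b)
        (Continuous.continuousOn (by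
          have : Continuous (deriv h) := hch.continuous_deriv (by norm_num)
          fun_prop))
        (fun y _ => (hder1 y).hasDerivWithinAt)
        (B := fun y => M * y^2 / 2) (B' := fun y => M * y)
        (by simp [hd1])
        hBder
        (fun y hy => by simpa using stepA y (Ico_subset_Icc_self hy))
      intro y hy; simpa using this hy
    -- step C
    have hderC : ∀ y : ℝ, HasDerivAt (fun z => h z - d1 * z) (deriv h y - d1) y := by
      intro y
      have h1 : HasDerivAt h (deriv h y) y := by
        have := hder 0 y
        rw [iteratedDeriv_one] at this
        simpa [iteratedDeriv_zero] using this
      simpa using h1.fun_sub ((hasDerivAt_id y).const_mul d1)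
    have hBderC : ∀ y : ℝ, HasDerivAt (fun z : ℝ => M * z^3 / 6) (M * y^2 / 2) y := by
      intro y
      have : HasDerivAt (fun z : ℝ => M * z^3 / 6) (M * (3 * y^2) / 6) y := by
        exact (((hasDerivAt_pow 3 y).const_mul M).div_const 6).congr_deriv (by ring)
      exact this.congr_deriv (by ring)
    have := image_norm_le_of_norm_deriv_right_le_deriv_boundary
      (f := fun z => h z - d1 * z) (f' := fun y => deriv h y - d1) (a := 0) (b := b)
      (Continuous.continuousOn (by
        have : Continuous h := hch.continuous
        fun_prop))
      (fun y _ => (hderC y).hasDerivWithinAt)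
      (B := fun y => M * y^3 / 6) (B' := fun y => M * y^2 / 2)
      (by simp [h0])
      hBderC
      (fun y hy => by simpa using stepB y (Ico_subset_Icc_self hy))
    intro y hy; simpa using this hy
  -- conclusion
  intro y hy
  have habs : ∀ z : ℝ, 0 ≤ z → z ≤ |x| → z * h z ≤ 0 := by
    intro z hz hzx
    have hc := cubic |x| (abs_nonneg x) z ⟨hz, hzx⟩
    have hz2 : z^2 ≤ x^2 := by
      have := sq_abs x
      nlinarith
    have h1 : h z - d1 * z ≤ M * z^3 / 6 := by
      have := le_abs_self (h z - d1 * z); linarith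
    -- z * h z ≤ d1 * z^2 + M * z^4 / 6
    have h2' : z * h z ≤ d1 * z^2 + M * z^4 / 6 := by nlinarith
    have h3 : M * z^4 ≤ (x^2 * M) * z^2 := by nlinarith [mul_le_mul_of_nonneg_left hz2 (mul_nonneg hM0 (sq_nonneg z))]
    nlinarith
  rcases le_or_gt 0 y with hy0 | hy0
  · exact habs y hy0 (by rwa [abs_of_nonneg hy0] at hy)
  · have : (-y) * h (-y) ≤ 0 := habs (-y) (by linarith) (by rwa [abs_of_neg hy0] at hy)
    rw [hodd y] at this
    nlinarith

section
variable (u : ℝ → ℝ → ℝ) (x : ℝ)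

noncomputable def proj' (x : ℝ) : ℝ → ℝ := fun y => max (-|x|) (min |x| y)

lemma lipproj (x : ℝ) : LipschitzWith 1 (proj' x) := by
  intro p q
  simp only [edist_dist, Real.dist_eq, ENNReal.coe_one, one_mul]
  apply ENNReal.ofReal_le_ofReal
  calc |proj' x p - proj' x q| ≤ |min |x| p - min |x| q| := by
        have := abs_max_sub_max_le_abs (min |x| p) (min |x| q) (-|x|)
        simpa [proj', max_comm] using this
    _ ≤ |p - q| := by
        have := abs_min_sub_min_le_max |x| p |x| q
        simpa using this
end

section
variable {u : ℝ → ℝ → ℝ} {x : ℝ}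
  (hu_smooth : ContDiff ℝ (⊤ : ℕ∞) (fun p : ℝ × ℝ => u p.1 p.2))

include hu_smooth in
lemma lipKey (T : ℝ) :
    ∃ K : ℝ≥0, ∀ t ∈ Icc (-1:ℝ) T, LipschitzWith K (fun y => u (proj' x y) t) := by
  set F : ℝ × ℝ → ℝ := fun p => u p.1 p.2 with hF
  have hFi : ContDiff ℝ ∞ F := hu_smooth.of_le (by simp)
  have hFd : Differentiable ℝ F := hFi.differentiable (by norm_num)
  have hG : Continuous (fderiv ℝ F) := hFi.continuous_fderiv (by norm_num)
  set S : Set (ℝ × ℝ) := Icc (-|x|) |x| ×ˢ Icc (-1:ℝ) T with hS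
  have hScomp : IsCompact S := (isCompact_Icc).prod isCompact_Icc
  obtain ⟨K0, hK0⟩ := hScomp.exists_bound_of_continuousOn hG.continuousOn
  set K1 : ℝ := max K0 0 with hK1
  refine ⟨K1.toNNReal, fun t ht => ?_⟩
  have hlipOn : LipschitzOnWith K1.toNNReal (fun y => u y t) (Icc (-|x|) |x|) := by
    apply Convex.lipschitzOnWith_of_nnnorm_hasDerivWithin_le (convex_Icc _ _)
      (f' := fun y => fderiv ℝ F (y, t) (1, 0))
    · intro y _
      have h1 : HasFDerivAt F (fderiv ℝ F (y, t)) (y, t) := (hFd _).hasFDerivAt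
      have h2 : HasDerivAt (fun z : ℝ => (z, t)) ((1:ℝ), (0:ℝ)) y :=
        (hasDerivAt_id y).prodMk (hasDerivAt_const y t)
      exact (h1.comp_hasDerivAt y h2).hasDerivWithinAt
    · intro y hy
      have hb : ‖fderiv ℝ F (y, t) (1, 0)‖ ≤ K1 := by
        calc ‖fderiv ℝ F (y, t) (1, 0)‖ ≤ ‖fderiv ℝ F (y, t)‖ * ‖((1:ℝ), (0:ℝ))‖ :=
              (fderiv ℝ F (y, t)).le_opNorm _
          _ ≤ K0 * 1 := by
              have hmem : ((y, t) : ℝ × ℝ) ∈ S := Set.mem_prod.mpr ⟨hy, ht⟩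
              apply mul_le_mul (hK0 _ hmem) ?_ (norm_nonneg _)
                ((norm_nonneg _).trans (hK0 _ hmem))
              simp [Prod.norm_def]
          _ ≤ K1 := by simp [hK1]
      rw [← norm_toNNReal]
      exact Real.toNNReal_mono hb
  have hmaps : MapsTo (proj' x) univ (Icc (-|x|) |x|) := by
    intro y _
    constructor
    · exact le_max_left _ _
    · exact max_le (by linarith [abs_nonneg x]) (min_le_left _ _)
  have := hlipOn.comp ((lipproj x).lipschitzOnWith (s := univ)) hmaps
  rw [mul_one, lipschitzOnWith_univ] at this
  exact this

include hu_smooth in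
lemma Cbound (T : ℝ) :
    ∃ C : ℝ, 0 ≤ C ∧ ∀ t ∈ Icc (-1:ℝ) T, ∀ y : ℝ, |u (proj' x y) t| ≤ C := by
  set F : ℝ × ℝ → ℝ := fun p => u p.1 p.2 with hF
  set S : Set (ℝ × ℝ) := Icc (-|x|) |x| ×ˢ Icc (-1:ℝ) T with hS
  have hScomp : IsCompact S := (isCompact_Icc).prod isCompact_Icc
  obtain ⟨C, hC⟩ := hScomp.exists_bound_of_continuousOn
    ((hu_smooth.continuous).continuousOn (s := S))
  refine ⟨max C 0, le_max_right _ _, fun t ht y => ?_⟩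
  have hmem : (proj' x y, t) ∈ S := by
    refine ⟨⟨le_max_left _ _, max_le (by linarith [abs_nonneg x]) (min_le_left _ _)⟩, ht⟩
  calc |u (proj' x y) t| = ‖F (proj' x y, t)‖ := rfl
    _ ≤ C := hC _ hmem
    _ ≤ max C 0 := le_max_left _ _
end



section
variable {u : ℝ → ℝ → ℝ} {x : ℝ}

lemma signv (hu_odd : ∀ y t : ℝ, u (-y) t = -u y t)
    (key : ∀ t : ℝ, 0 ≤ t → ∀ y : ℝ, |y| ≤ |x| → y * u y t ≤ 0) :
    ∀ t : ℝ, 0 ≤ t → ∀ y : ℝ, y * u (proj' x y) t ≤ 0 := by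
  intro t ht y
  set z : ℝ := proj' x y with hz
  have hzabs : |z| ≤ |x| := by
    rw [abs_le]
    exact ⟨le_max_left _ _, max_le (by linarith [abs_nonneg x]) (min_le_left _ _)⟩
  have hkz : z * u z t ≤ 0 := key t ht z hzabs
  rcases lt_trichotomy z 0 with h | h | h
  · have hy' : min |x| y = y := by
      rcases le_total y |x| with h' | h'
      · exact min_eq_right h'
      · exfalso
        have : z = |x| := by
          rw [hz]; unfold proj'; rw [min_eq_left h', max_eq_right (by linarith [abs_nonneg x])]
        linarith [abs_nonneg x]
    have hyz : y ≤ z := by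
      rw [hz]; unfold proj'; rw [hy']; exact le_max_right _ _
    have hu0 : 0 ≤ u z t := by nlinarith
    have hy0 : y ≤ 0 := by linarith
    nlinarith
  · rw [h]
    have : u (0:ℝ) t = 0 := by have := hu_odd 0 t; simp at this; linarith
    rw [this]; ring_nf; rfl
  · have hm : 0 < min |x| y := by
      by_contra h'
      push_neg at h'
      have : z ≤ 0 := by
        rw [hz]; unfold proj'; exact max_le (by linarith [abs_nonneg x]) h'
      linarith
    have hy0 : 0 < y := lt_of_lt_of_le hm (min_le_right _ _)
    have hzy : z ≤ y := by
      rw [hz]; unfold proj'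
      exact max_le (by linarith [abs_nonneg x]) (min_le_right _ _)
    have hu0 : u z t ≤ 0 := by nlinarith
    nlinarith
end



section
variable {u : ℝ → ℝ → ℝ} {x : ℝ}

lemma exists_sol
    (hu_smooth : ContDiff ℝ (⊤ : ℕ∞) (fun p : ℝ × ℝ => u p.1 p.2))
    (hsign : ∀ t : ℝ, 0 ≤ t → ∀ y : ℝ, y * u (proj' x y) t ≤ 0)
    (lipKey : ∀ T : ℝ, ∃ K : ℝ≥0, ∀ t ∈ Icc (-1:ℝ) T, LipschitzWith K (fun y => u (proj' x y) t))
    (Cbound : ∀ T : ℝ, ∃ C : ℝ, 0 ≤ C ∧ ∀ t ∈ Icc (-1:ℝ) T, ∀ y : ℝ, |u (proj' x y) t| ≤ C)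
    (N : ℕ) :
    ∃ f : ℝ → ℝ, f 0 = x ∧ ContinuousOn f (Icc (-1) ((N:ℝ)+1)) ∧
      (∀ t ∈ Ioo (-1:ℝ) ((N:ℝ)+1), HasDerivAt f (u (proj' x (f t)) t) t) ∧
      (∀ t ∈ Icc (0:ℝ) ((N:ℝ)+1), |f t| ≤ |x|) := by
  obtain ⟨K, hK⟩ := lipKey ((N:ℝ)+1)
  obtain ⟨C, hC0, hC⟩ := Cbound ((N:ℝ)+1)
  set v : ℝ → ℝ → ℝ := fun t y => u (proj' x y) t with hv
  have hpl : IsPicardLindelof v (tmin := -1) (tmax := (N:ℝ)+1)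
      ⟨0, by constructor <;> [norm_num; positivity]⟩ x (C*((N:ℝ)+2)+1).toNNReal 0
      C.toNNReal K := by
    constructor
    · exact fun t ht => (hK t ht).lipschitzOnWith
    · intro y _
      exact ((hu_smooth.continuous).comp (continuous_const.prodMk continuous_id)).continuousOn
    · intro t ht y _
      rw [Real.coe_toNNReal _ hC0]
      simpa [Real.norm_eq_abs] using hC t ht y
    · have hN : (0:ℝ) ≤ (N:ℝ) := Nat.cast_nonneg N
      have h1 : max ((N:ℝ)+1-0) (0-(-1)) ≤ (N:ℝ)+2 := by
        apply max_le <;> linarith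
      rw [Real.coe_toNNReal _ hC0, Real.coe_toNNReal _ (by positivity)]
      simp only [NNReal.coe_zero, sub_zero] at h1 ⊢
      nlinarith [mul_le_mul_of_nonneg_left h1 hC0]
  obtain ⟨f, hf0, hfd⟩ := hpl.exists_eq_forall_mem_Icc_hasDerivWithinAt₀
  have hcont : ContinuousOn f (Icc (-1) ((N:ℝ)+1)) :=
    fun t ht => (hfd t ht).continuousWithinAt
  have hDerivAt : ∀ t ∈ Ioo (-1:ℝ) ((N:ℝ)+1), HasDerivAt f (v t (f t)) t := by
    intro t ht
    exact (hfd t (Ioo_subset_Icc_self ht)).hasDerivAt (Icc_mem_nhds ht.1 ht.2)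
  refine ⟨f, hf0, hcont, hDerivAt, ?_⟩
  have hsub : Icc (0:ℝ) ((N:ℝ)+1) ⊆ Icc (-1:ℝ) ((N:ℝ)+1) := Icc_subset_Icc (by norm_num) le_rfl
  have hIooSub : Ioo (0:ℝ) ((N:ℝ)+1) ⊆ Ioo (-1:ℝ) ((N:ℝ)+1) := Ioo_subset_Ioo (by norm_num) le_rfl
  have hganti : AntitoneOn (fun t => (f t)^2) (Icc (0:ℝ) ((N:ℝ)+1)) := by
    apply antitoneOn_of_deriv_nonpos (convex_Icc _ _)
    · exact (hcont.mono hsub).pow 2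
    · rw [interior_Icc]
      intro s hs
      exact ((hDerivAt s (hIooSub hs)).pow 2).differentiableAt.differentiableWithinAt
    · rw [interior_Icc]
      intro s hs
      have hg := (hDerivAt s (hIooSub hs)).fun_pow 2
      rw [hg.deriv]
      have := hsign s hs.1.le (f s)
      simp only [hv] at this ⊢
      norm_num
      nlinarith
  intro t ht
  have hle : (f t)^2 ≤ x^2 := by
    have := hganti (left_mem_Icc.mpr (by positivity)) ht ht.1
    simpa [hf0] using this
  have := Real.sqrt_le_sqrt hle
  rwa [Real.sqrt_sq_eq_abs, Real.sqrt_sq_eq_abs] at this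
end



lemma proj'_eq {x y : ℝ} (h : |y| ≤ |x|) : proj' x y = y := by
  rw [abs_le] at h
  unfold proj'
  rw [min_eq_right h.2, max_eq_right h.1]

section
variable {u : ℝ → ℝ → ℝ} {x : ℝ}

lemma glue
    (lipKey : ∀ T : ℝ, ∃ K : ℝ≥0, ∀ t ∈ Icc (-1:ℝ) T, LipschitzWith K (fun y => u (proj' x y) t))
    (f : ℕ → ℝ → ℝ)
    (hf0 : ∀ N : ℕ, f N 0 = x)
    (hfcont : ∀ N : ℕ, ContinuousOn (f N) (Icc (-1) ((N:ℝ)+1)))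
    (hfderiv : ∀ N : ℕ, ∀ t ∈ Ioo (-1:ℝ) ((N:ℝ)+1), HasDerivAt (f N) (u (proj' x (f N t)) t) t)
    (hfbound : ∀ N : ℕ, ∀ t ∈ Icc (0:ℝ) ((N:ℝ)+1), |f N t| ≤ |x|) :
    ∃ φ : ℝ → ℝ, φ 0 = x ∧ (∀ t : ℝ, 0 ≤ t → HasDerivAt φ (u (φ t) t) t) ∧
      ∀ t : ℝ, 0 ≤ t → |φ t| ≤ |x| := by
  -- uniqueness / agreement
  have agree : ∀ n m : ℕ, ∀ s : ℝ,
      s ∈ Icc (-1:ℝ) (min ((n:ℝ)+1) ((m:ℝ)+1)) → f n s = f m s := by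
    intro n m s hs
    set b : ℝ := min ((n:ℝ)+1) ((m:ℝ)+1) with hb
    have hb1 : (1:ℝ) ≤ b := le_min (by linarith [Nat.cast_nonneg (α := ℝ) n])
      (by linarith [Nat.cast_nonneg (α := ℝ) m])
    obtain ⟨K, hK⟩ := lipKey b
    set w : ℝ → ℝ → ℝ := fun t y => u (proj' x y) (max (-1) (min b t)) with hw
    have hwlip : ∀ t : ℝ, LipschitzOnWith K (w t) univ := by
      intro t
      rw [lipschitzOnWith_univ]
      apply hK
      constructor
      · exact le_max_left _ _
      · exact max_le (by linarith) (min_le_left _ _)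
    have hwf : ∀ t ∈ Ioo (-1:ℝ) b, w t = fun y => u (proj' x y) t := by
      intro t ht
      have h' : max (-1) (min b t) = t := by
        rw [min_eq_right ht.2.le, max_eq_right ht.1.le]
      funext y
      simp only [hw]
      rw [h']
    have key : ∀ k : ℕ, b ≤ (k:ℝ)+1 → ∀ t ∈ Ioo (-1:ℝ) b,
        HasDerivAt (f k) (w t (f k t)) t := by
      intro k hk t ht
      rw [hwf t ht]
      exact hfderiv k t ⟨ht.1, lt_of_lt_of_le ht.2 hk⟩
    have h0mem : (0:ℝ) ∈ Ioo (-1:ℝ) b := ⟨by norm_num, by linarith⟩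
    have := ODE_solution_unique_of_mem_Icc (s := fun _ => univ) (fun t _ => hwlip t) h0mem
      ((hfcont n).mono (Icc_subset_Icc le_rfl (min_le_left _ _)))
      (key n (min_le_left _ _))
      (fun _ _ => mem_univ _)
      ((hfcont m).mono (Icc_subset_Icc le_rfl (min_le_right _ _)))
      (key m (min_le_right _ _))
      (fun _ _ => mem_univ _)
      (by rw [hf0 n, hf0 m])
    exact this hs
  refine ⟨fun s => f (⌊s⌋₊ + 1) s, ?_, ?_, ?_⟩
  · simpa [Nat.floor_zero] using hf0 1
  · intro t₀ ht₀
    set N : ℕ := ⌊t₀⌋₊ + 2 with hN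
    have ht₀lt : t₀ < (⌊t₀⌋₊:ℝ) + 1 := Nat.lt_floor_add_one t₀
    have heq : (fun s => f (⌊s⌋₊ + 1) s) =ᶠ[𝓝 t₀] f N := by
      filter_upwards [Ioo_mem_nhds (show t₀ - 1/2 < t₀ by linarith)
        (show t₀ < t₀ + 1/2 by linarith)] with s hs
      apply agree
      have hs1 : s < (⌊s⌋₊:ℝ) + 1 := Nat.lt_floor_add_one s
      have hNcast : ((N:ℕ):ℝ) = (⌊t₀⌋₊:ℝ) + 2 := by rw [hN]; push_cast; ring
      constructor
      · simp only [mem_Ioo] at hs; linarith [hs.1]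
      · apply le_min
        · push_cast; linarith
        · rw [hNcast]; simp only [mem_Ioo] at hs; linarith [hs.2]
    have htN : t₀ ∈ Ioo (-1:ℝ) ((N:ℝ)+1) := by
      constructor
      · linarith
      · have : ((N:ℕ):ℝ) = (⌊t₀⌋₊:ℝ) + 2 := by rw [hN]; push_cast; ring
        rw [this]; linarith
    have hbnd : |f N t₀| ≤ |x| := hfbound N t₀ ⟨ht₀, htN.2.le⟩
    have hder := hfderiv N t₀ htN
    rw [proj'_eq hbnd] at hder
    have hval : f N t₀ = f (⌊t₀⌋₊ + 1) t₀ := (heq.eq_of_nhds).symm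
    have hfin := hder.congr_of_eventuallyEq heq
    simpa [← hval] using hfin
  · intro t ht
    apply hfbound (⌊t⌋₊ + 1) t
    refine ⟨ht, ?_⟩
    have := Nat.lt_floor_add_one t
    push_cast
    linarith
end

/-- Let `u : ℝ × [0,∞) → ℝ` be smooth and odd in its first (spatial) variable,
and suppose (standing assumption) that for all `t ≥ 0`,
`x² · sup_y |∂₁³u(y,t)| ≤ −∂₁u(0,t)` (we also record that the sup is finite, i.e. the range is
bounded above, so that the supremum is meaningful).  Then the solution `φ` of the ODE
`φ(0) = x`, `φ'(t) = u(φ(t), t)` exists for all `t ≥ 0` and satisfies `|φ(t)| ≤ |x|`. -/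
theorem ode_global_existence_and_bound
    (u : ℝ → ℝ → ℝ)
    (hu_smooth : ContDiff ℝ (⊤ : ℕ∞) (fun p : ℝ × ℝ => u p.1 p.2))
    (hu_odd : ∀ y t : ℝ, u (-y) t = -u y t)
    (hbdd : ∀ t : ℝ, BddAbove (Set.range fun y => |iteratedDeriv 3 (fun z => u z t) y|))
    (x : ℝ)
    (hstanding : ∀ t : ℝ, 0 ≤ t →
      x ^ 2 * (⨆ y : ℝ, |iteratedDeriv 3 (fun z => u z t) y|) ≤ -(deriv (fun z => u z t) 0)) :
    ∃ φ : ℝ → ℝ, φ 0 = x ∧ (∀ t : ℝ, 0 ≤ t → HasDerivAt φ (u (φ t) t) t) ∧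
      ∀ t : ℝ, 0 ≤ t → |φ t| ≤ |x| := by
  have key := key_sign u hu_smooth hu_odd hbdd x hstanding
  have hsign := signv hu_odd key
  have lip := lipKey (u := u) (x := x) hu_smooth
  have Cb := Cbound (u := u) (x := x) hu_smooth
  choose f hf0 hfcont hfderiv hfbound using exists_sol hu_smooth hsign lip Cb
  exact glue lip f hf0 hfcont hfderiv hfbound
end

section
/- Under the standing assumption, for all t ≥ 0 the solution satisfies the two-sided exponential bound: |x| · exp ∫₀^t ( ∂₁u(0,s) − x² sup|∂₁³u(·,s)|/6 ) ds ≤ |φ(x,t)| ≤ |x| · exp ∫₀^t ( ∂₁u(0,s) + x² sup|∂₁³u(·,s)|/6 ) ds. -/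
open Real intervalIntegral

open Set

section Aux

lemma my_deriv_neg_of_odd {g : ℝ → ℝ} (hg : Differentiable ℝ g) (hodd : ∀ y, g (-y) = -g y)
    (y : ℝ) : deriv g (-y) = deriv g y := by
  have h1 : HasDerivAt (fun z : ℝ => -g (-z)) (deriv g (-y)) y := by
    exact ((hg (-y)).hasDerivAt.comp y ((hasDerivAt_id y).neg)).neg.congr_deriv (by simp)
  have h2 : (fun z : ℝ => -g (-z)) = g := funext fun z => by rw [hodd]; ring
  rw [h2] at h1
  exact h1.deriv.symm

lemma my_deriv_neg_of_even {g : ℝ → ℝ} (hg : Differentiable ℝ g) (heven : ∀ y, g (-y) = g y)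
    (y : ℝ) : deriv g (-y) = -deriv g y := by
  have h1 : HasDerivAt (fun z : ℝ => g (-z)) (-deriv g (-y)) y := by
    exact ((hg (-y)).hasDerivAt.comp y ((hasDerivAt_id y).neg)).congr_deriv (by simp)
  have h2 : (fun z : ℝ => g (-z)) = g := funext fun z => by rw [heven]
  rw [h2] at h1
  rw [h1.deriv]; ring

lemma my_slice_hasDerivAt {f : ℝ × ℝ → ℝ} (hf : ContDiff ℝ (⊤ : ℕ∞) f) (t y : ℝ) :
    HasDerivAt (fun z => f (z, t)) (fderiv ℝ f (y, t) (1, 0)) y := by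
  have h := (hf.differentiable (by simp) (y, t)).hasFDerivAt
  have hc : HasDerivAt (fun z : ℝ => (z, t)) ((1 : ℝ), (0 : ℝ)) y :=
    (hasDerivAt_id y).prodMk (hasDerivAt_const y t)
  exact h.comp_hasDerivAt y hc

lemma my_D1_contDiff {f : ℝ × ℝ → ℝ} (hf : ContDiff ℝ (⊤ : ℕ∞) f) :
    ContDiff ℝ (⊤ : ℕ∞) (fun p => fderiv ℝ f p (1, 0)) :=
  (hf.fderiv_right (by simp)).clm_apply contDiff_const

noncomputable def myU0 (u : ℝ → ℝ → ℝ) : ℝ × ℝ → ℝ := fun p => u p.1 p.2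
noncomputable def myU1 (u : ℝ → ℝ → ℝ) : ℝ × ℝ → ℝ := fun p => fderiv ℝ (myU0 u) p (1, 0)
noncomputable def myU2 (u : ℝ → ℝ → ℝ) : ℝ × ℝ → ℝ := fun p => fderiv ℝ (myU1 u) p (1, 0)
noncomputable def myU3 (u : ℝ → ℝ → ℝ) : ℝ × ℝ → ℝ := fun p => fderiv ℝ (myU2 u) p (1, 0)

variable {u : ℝ → ℝ → ℝ}

lemma myU0_contDiff (hu : ContDiff ℝ (⊤ : ℕ∞) (fun p : ℝ × ℝ => u p.1 p.2)) :
    ContDiff ℝ (⊤ : ℕ∞) (myU0 u) := hu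
lemma myU1_contDiff (hu : ContDiff ℝ (⊤ : ℕ∞) (fun p : ℝ × ℝ => u p.1 p.2)) :
    ContDiff ℝ (⊤ : ℕ∞) (myU1 u) := my_D1_contDiff (myU0_contDiff hu)
lemma myU2_contDiff (hu : ContDiff ℝ (⊤ : ℕ∞) (fun p : ℝ × ℝ => u p.1 p.2)) :
    ContDiff ℝ (⊤ : ℕ∞) (myU2 u) := my_D1_contDiff (myU1_contDiff hu)
lemma myU3_contDiff (hu : ContDiff ℝ (⊤ : ℕ∞) (fun p : ℝ × ℝ => u p.1 p.2)) :
    ContDiff ℝ (⊤ : ℕ∞) (myU3 u) := my_D1_contDiff (myU2_contDiff hu)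

variable (hu : ContDiff ℝ (⊤ : ℕ∞) (fun p : ℝ × ℝ => u p.1 p.2))
include hu

lemma my_slice_contDiff (t : ℝ) : ContDiff ℝ (⊤ : ℕ∞) (fun z => u z t) :=
  hu.comp (contDiff_id.prodMk contDiff_const)

lemma my_hD1 (t z : ℝ) : HasDerivAt (fun z => u z t) (myU1 u (z, t)) z :=
  my_slice_hasDerivAt (myU0_contDiff hu) t z

lemma my_hD2 (t z : ℝ) : HasDerivAt (fun y => myU1 u (y, t)) (myU2 u (z, t)) z :=
  my_slice_hasDerivAt (myU1_contDiff hu) t z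

lemma my_hD3 (t z : ℝ) : HasDerivAt (fun y => myU2 u (y, t)) (myU3 u (z, t)) z :=
  my_slice_hasDerivAt (myU2_contDiff hu) t z

lemma my_deriv_slice (t : ℝ) : deriv (fun z => u z t) = fun y => myU1 u (y, t) :=
  funext fun y => (my_hD1 hu t y).deriv

lemma my_deriv2_slice (t : ℝ) : deriv (fun y => myU1 u (y, t)) = fun y => myU2 u (y, t) :=
  funext fun y => (my_hD2 hu t y).deriv

lemma my_deriv3_slice (t : ℝ) : deriv (fun y => myU2 u (y, t)) = fun y => myU3 u (y, t) :=
  funext fun y => (my_hD3 hu t y).deriv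

lemma my_iteratedDeriv3_slice (t : ℝ) :
    iteratedDeriv 3 (fun z => u z t) = fun y => myU3 u (y, t) := by
  rw [show (3 : ℕ) = 2 + 1 from rfl, iteratedDeriv_succ,
    show (2 : ℕ) = 1 + 1 from rfl, iteratedDeriv_succ, iteratedDeriv_one,
    my_deriv_slice hu t, my_deriv2_slice hu t, my_deriv3_slice hu t]

variable (hu_odd : ∀ y t : ℝ, u (-y) t = -u y t)
include hu_odd

omit hu in
lemma my_u_zero (t : ℝ) : u 0 t = 0 := by
  have := hu_odd 0 t; rw [neg_zero] at this; linarith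

lemma my_U1_even (t y : ℝ) : myU1 u (-y, t) = myU1 u (y, t) := by
  have hdiff : Differentiable ℝ (fun z => u z t) := fun z => (my_hD1 hu t z).differentiableAt
  have h := my_deriv_neg_of_odd hdiff (fun y => hu_odd y t) y
  rw [my_deriv_slice hu t] at h
  exact h

lemma my_U2_odd (t y : ℝ) : myU2 u (-y, t) = -myU2 u (y, t) := by
  have hdiff : Differentiable ℝ (fun y => myU1 u (y, t)) :=
    fun z => (my_hD2 hu t z).differentiableAt
  have h := my_deriv_neg_of_even hdiff (fun y => my_U1_even hu hu_odd t y) y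
  rw [my_deriv2_slice hu t] at h
  exact h

lemma my_U2_zero (t : ℝ) : myU2 u (0, t) = 0 := by
  have := my_U2_odd hu hu_odd t 0
  rw [neg_zero] at this; linarith

lemma my_cubic_bound_nonneg {M : ℝ} (t : ℝ) (hM3 : ∀ z : ℝ, |myU3 u (z, t)| ≤ M)
    {y : ℝ} (hy : 0 ≤ y) :
    |u y t - myU1 u (0, t) * y| ≤ M * y ^ 3 / 6 := by
  have hc2 : ContinuousOn (fun z => myU2 u (z, t)) (Icc 0 y) :=
    (((myU2_contDiff hu).continuous).comp (continuous_id.prodMk continuous_const)).continuousOn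
  have claim2 : ∀ z ∈ Icc (0:ℝ) y, |myU2 u (z, t)| ≤ M * z := by
    intro z hz
    have := norm_image_sub_le_of_norm_deriv_right_le_segment hc2
      (fun w _ => (my_hD3 hu t w).hasDerivWithinAt)
      (fun w _ => hM3 w) z hz
    simpa [my_U2_zero hu hu_odd t] using this
  have claim1 : ∀ z ∈ Icc (0:ℝ) y, |myU1 u (z, t) - myU1 u (0, t)| ≤ M * z ^ 2 / 2 := by
    have hB : ∀ z : ℝ, HasDerivAt (fun z => M * z ^ 2 / 2) (M * z) z := by
      intro z
      have := ((hasDerivAt_pow 2 z).const_mul M).div_const 2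
      refine this.congr_deriv ?_; push_cast; ring
    have := image_norm_le_of_norm_deriv_right_le_deriv_boundary
      (f := fun z => myU1 u (z, t) - myU1 u (0, t)) (f' := fun z => myU2 u (z, t))
      (a := 0) (b := y)
      ((((myU1_contDiff hu).continuous).comp
        (continuous_id.prodMk continuous_const)).continuousOn.sub continuousOn_const)
      (fun w _ => ((my_hD2 hu t w).sub_const _).hasDerivWithinAt)
      (by simp) hB
      (fun w hw => claim2 w ⟨hw.1, hw.2.le⟩)
    intro z hz
    simpa using this hz
  have hB : ∀ z : ℝ, HasDerivAt (fun z => M * z ^ 3 / 6) (M * z ^ 2 / 2) z := by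
    intro z
    have := ((hasDerivAt_pow 3 z).const_mul M).div_const 6
    refine this.congr_deriv ?_; push_cast; ring
  have claim0 := image_norm_le_of_norm_deriv_right_le_deriv_boundary
    (f := fun z => u z t - myU1 u (0, t) * z) (f' := fun z => myU1 u (z, t) - myU1 u (0, t))
    (a := 0) (b := y)
    ((my_slice_contDiff hu t).continuous.continuousOn.sub
      (continuousOn_const.mul continuousOn_id))
    (fun w _ => ((my_hD1 hu t w).sub
      (by simpa using (hasDerivAt_id w).const_mul (myU1 u (0, t)))).hasDerivWithinAt)
    (by simp [my_u_zero hu_odd t]) hB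
    (fun w hw => claim1 w ⟨hw.1, hw.2.le⟩)
  simpa using claim0 (right_mem_Icc.2 hy)

lemma my_cubic_bound {M : ℝ} (t : ℝ) (hM3 : ∀ z : ℝ, |myU3 u (z, t)| ≤ M) (y : ℝ) :
    |u y t - myU1 u (0, t) * y| ≤ M * |y| ^ 3 / 6 := by
  rcases le_or_gt 0 y with hy | hy
  · rw [abs_of_nonneg hy]
    exact my_cubic_bound_nonneg hu hu_odd t hM3 hy
  · have h := my_cubic_bound_nonneg hu hu_odd t hM3 (neg_nonneg.2 hy.le)
    rw [hu_odd y t] at h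
    rw [abs_of_neg hy]
    calc |u y t - myU1 u (0, t) * y| = |-u y t - myU1 u (0, t) * -y| := by
          rw [← abs_neg]; congr 1; ring
      _ ≤ M * (-y) ^ 3 / 6 := h

end Aux

section Main
variable {u : ℝ → ℝ → ℝ}

lemma pos_case
    (hu : ContDiff ℝ (⊤ : ℕ∞) (fun p : ℝ × ℝ => u p.1 p.2))
    (hu_odd : ∀ y t : ℝ, u (-y) t = -u y t)
    (hbdd : ∀ t : ℝ, BddAbove (Set.range fun y => |iteratedDeriv 3 (fun z => u z t) y|))
    {x : ℝ} (hx : 0 < x)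
    (hstanding : ∀ t : ℝ, 0 ≤ t →
      x ^ 2 * (⨆ y : ℝ, |iteratedDeriv 3 (fun z => u z t) y|) ≤ -(deriv (fun z => u z t) 0))
    {φ : ℝ → ℝ}
    (hφ0 : φ 0 = x)
    (hφode : ∀ t : ℝ, 0 ≤ t → HasDerivAt φ (u (φ t) t) t) :
    ∀ t : ℝ, 0 ≤ t →
      |x| * Real.exp (∫ s in (0:ℝ)..t,
          (deriv (fun z => u z s) 0 -
            x ^ 2 * (⨆ y : ℝ, |iteratedDeriv 3 (fun z => u z s) y|) / 6)) ≤ |φ t| ∧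
      |φ t| ≤ |x| * Real.exp (∫ s in (0:ℝ)..t,
          (deriv (fun z => u z s) 0 +
            x ^ 2 * (⨆ y : ℝ, |iteratedDeriv 3 (fun z => u z s) y|) / 6)) := by
  intro T hT
  set a : ℝ → ℝ := fun s => myU1 u (0, s) with ha_def
  set M : ℝ → ℝ := fun s => ⨆ w : ℝ, |myU3 u (w, s)| with hM_def
  -- translation of the hypotheses
  have hbdd' : ∀ s : ℝ, BddAbove (Set.range fun w => |myU3 u (w, s)|) := by
    intro s
    have := hbdd s
    rw [my_iteratedDeriv3_slice hu s] at this
    exact this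
  have ha_eq : ∀ s : ℝ, deriv (fun z => u z s) 0 = a s := by
    intro s; rw [my_deriv_slice hu s]
  have hM_eq : ∀ s : ℝ, (⨆ y : ℝ, |iteratedDeriv 3 (fun z => u z s) y|) = M s := by
    intro s; rw [my_iteratedDeriv3_slice hu s]
  have hM3 : ∀ s z : ℝ, |myU3 u (z, s)| ≤ M s := fun s z => le_ciSup (hbdd' s) z
  have hM_nonneg : ∀ s : ℝ, 0 ≤ M s := fun s => (abs_nonneg _).trans (hM3 s 0)
  have hstand : ∀ s : ℝ, 0 ≤ s → x ^ 2 * M s ≤ -a s := by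
    intro s hs
    have := hstanding s hs
    rwa [ha_eq s, hM_eq s] at this
  have ha_nonpos : ∀ s : ℝ, 0 ≤ s → a s ≤ 0 := by
    intro s hs
    have h1 := hstand s hs
    nlinarith [hM_nonneg s, sq_nonneg x]
  have ha_cont : Continuous a :=
    (myU1_contDiff hu).continuous.comp (continuous_const.prodMk continuous_id)
  have hM_meas : Measurable M := by
    apply LowerSemicontinuous.measurable
    exact lowerSemicontinuous_ciSup hbdd'
      (fun w => (((myU3_contDiff hu).continuous.comp
        (continuous_const.prodMk continuous_id)).abs).lowerSemicontinuous)
  have hφcont : ContinuousOn φ (Set.Icc 0 T) :=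
    fun s hs => ((hφode s hs.1).continuousAt).continuousWithinAt
  -- a bound for φ and a Lipschitz-type bound for u
  obtain ⟨R, hR⟩ : ∃ R, ∀ s ∈ Set.Icc (0:ℝ) T, ‖φ s‖ ≤ R :=
    isCompact_Icc.exists_bound_of_continuousOn hφcont
  have hR0 : 0 ≤ R := le_trans (norm_nonneg _) (hR 0 ⟨le_refl 0, hT⟩)
  obtain ⟨K, hK⟩ : ∃ K, ∀ p ∈ (Set.Icc (-R) R) ×ˢ (Set.Icc (0:ℝ) T), ‖myU1 u p‖ ≤ K :=
    (isCompact_Icc.prod isCompact_Icc).exists_bound_of_continuousOn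
      (myU1_contDiff hu).continuous.continuousOn
  set K0 : ℝ := max K 0 with hK0_def
  have hLip : ∀ s ∈ Set.Icc (0:ℝ) T, ∀ y ∈ Set.Icc (-R) R, |u y s| ≤ K0 * |y| := by
    intro s hs y hy
    have h0mem : (0:ℝ) ∈ Set.Icc (-R) R := by constructor <;> linarith
    have := Convex.norm_image_sub_le_of_norm_hasDerivWithin_le
      (f := fun z => u z s) (f' := fun z => myU1 u (z, s)) (C := K0)
      (fun z _ => (my_hD1 hu s z).hasDerivWithinAt)
      (fun z hz => le_trans (hK (z, s) ⟨hz, hs⟩) (le_max_left _ _))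
      (convex_Icc _ _) h0mem hy
    simpa [my_u_zero hu_odd s, Real.norm_eq_abs] using this
  -- positivity of φ on [0, T]
  have hφpos : ∀ s ∈ Set.Icc (0:ℝ) T, 0 < φ s := by
    have hφne : ∀ t₁ ∈ Set.Icc (0:ℝ) T, φ t₁ ≠ 0 := by
      intro t₁ ht₁ hzero
      set ψ : ℝ → ℝ := fun τ => φ (t₁ - τ) with hψ_def
      have hψd : ∀ τ ∈ Set.Icc (0:ℝ) t₁, HasDerivAt ψ (-u (ψ τ) (t₁ - τ)) τ := by
        intro τ hτ
        have hin : HasDerivAt (fun τ : ℝ => t₁ - τ) (-1) τ := by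
          exact ((hasDerivAt_const τ t₁).sub (hasDerivAt_id τ)).congr_deriv (by simp)
        have hout := hφode (t₁ - τ) (by linarith [hτ.2])
        have := HasDerivAt.comp τ hout hin
        exact this.congr_deriv (by simp [hψ_def])
      have hψcont : ContinuousOn ψ (Set.Icc 0 t₁) :=
        fun τ hτ => ((hψd τ hτ).continuousAt).continuousWithinAt
      have hgr := norm_le_gronwallBound_of_norm_deriv_right_le
        (f := ψ) (f' := fun τ => -u (ψ τ) (t₁ - τ)) (δ := 0) (K := K0) (ε := 0)
        (a := 0) (b := t₁) hψcont
        (fun τ hτ => (hψd τ ⟨hτ.1, hτ.2.le⟩).hasDerivWithinAt)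
        (by simp [hψ_def, hzero])
        (by
          intro τ hτ
          have hmem : t₁ - τ ∈ Set.Icc (0:ℝ) T := by
            constructor
            · linarith [hτ.2]
            · linarith [hτ.1, ht₁.2]
          have hrange : ψ τ ∈ Set.Icc (-R) R := by
            have := hR (t₁ - τ) hmem
            rw [Real.norm_eq_abs, abs_le] at this
            exact this
          have := hLip (t₁ - τ) hmem (ψ τ) hrange
          rw [norm_neg, Real.norm_eq_abs, Real.norm_eq_abs]
          linarith)
      have := hgr t₁ ⟨ht₁.1, le_refl t₁⟩
      rw [gronwallBound_ε0, zero_mul] at this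
      have hψt₁ : ψ t₁ = x := by simp [hψ_def, hφ0]
      rw [hψt₁, Real.norm_eq_abs, abs_of_pos hx] at this
      linarith
    intro s hs
    rcases lt_trichotomy (φ s) 0 with h | h | h
    · have h0T : φ 0 = x := hφ0
      have : (0:ℝ) ∈ Set.Icc (φ s) (φ 0) := by
        rw [h0T]; exact ⟨h.le, hx.le⟩
      obtain ⟨t₁, ht₁, hval⟩ := intermediate_value_Icc' hs.1 (hφcont.mono
        (Set.Icc_subset_Icc (le_refl 0) hs.2)) this
      exact absurd hval (hφne t₁ ⟨ht₁.1, le_trans ht₁.2 hs.2⟩)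
    · exact absurd h (hφne s hs)
    · exact h
  -- bootstrap : φ ≤ x on [0, T]
  have hφle : ∀ s ∈ Set.Icc (0:ℝ) T, φ s ≤ x := by
    intro s hs
    have key : ∀ δ : ℝ, 0 < δ → φ s ≤ x + δ := by
      intro δ hδ
      set ε : ℝ := min δ x * Real.exp (-T) with hε_def
      have hε : 0 < ε := mul_pos (lt_min hδ hx) (Real.exp_pos _)
      have hεT : ∀ w ∈ Set.Icc (0:ℝ) T, ε * Real.exp w ≤ min δ x := by
        intro w hw
        rw [hε_def, mul_assoc, ← Real.exp_add]
        calc min δ x * Real.exp (-T + w) ≤ min δ x * Real.exp 0 := by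
              apply mul_le_mul_of_nonneg_left _ (le_min hδ.le hx.le)
              exact Real.exp_le_exp.2 (by linarith [hw.2])
          _ = min δ x := by rw [Real.exp_zero, mul_one]
      have hbound : ∀ w ∈ Set.Ico (0:ℝ) T, φ w = x + ε * Real.exp w →
          u (φ w) w < ε * Real.exp w := by
        intro w hw hcontact
        have hw' : w ∈ Set.Icc (0:ℝ) T := ⟨hw.1, hw.2.le⟩
        have hεw : ε * Real.exp w ≤ min δ x := hεT w hw'
        have hy2x : φ w ≤ 2 * x := by
          have := min_le_right δ x; rw [hcontact]; linarith
        have hypos : 0 < φ w := hφpos w hw'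
        have hcb := my_cubic_bound hu hu_odd w (hM3 w) (φ w)
        rw [abs_of_pos hypos, abs_le] at hcb
        have h1 : u (φ w) w ≤ a w * φ w + M w * φ w ^ 3 / 6 := by linarith [hcb.2]
        have h2 : a w * φ w + M w * φ w ^ 3 / 6 ≤ 0 := by
          nlinarith [mul_le_mul_of_nonneg_right (hstand w hw.1) hypos.le,
            mul_nonneg (mul_nonneg (hM_nonneg w) hypos.le)
              (mul_nonneg (sub_nonneg.2 hy2x) (by linarith : (0:ℝ) ≤ 2 * x + φ w)),
            mul_nonneg (mul_nonneg (hM_nonneg w) hypos.le) (sq_nonneg x)]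
        have h3 : 0 < ε * Real.exp w := mul_pos hε (Real.exp_pos w)
        linarith
      have hbar := image_le_of_deriv_right_lt_deriv_boundary
        (f := φ) (f' := fun w => u (φ w) w) (a := 0) (b := T)
        (B := fun w => x + ε * Real.exp w) (B' := fun w => ε * Real.exp w)
        hφcont
        (fun w hw => (hφode w hw.1).hasDerivWithinAt)
        (by have := mul_pos hε (Real.exp_pos (0:ℝ)); rw [hφ0]; beta_reduce; linarith)
        (fun w => ((Real.hasDerivAt_exp w).const_mul ε).const_add x)
        hbound
      have h4 := hbar hs
      have h5 := hεT s hs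
      have h6 := min_le_left δ x
      linarith
    by_contra hcon
    push_neg at hcon
    have := key ((φ s - x) / 2) (by linarith)
    linarith
  -- the logarithmic derivative
  set g : ℝ → ℝ := fun s => u (φ s) s / φ s with hg_def
  have hgd : ∀ s ∈ Set.Icc (0:ℝ) T, HasDerivAt (fun w => Real.log (φ w)) (g s) s :=
    fun s hs => (hφode s hs.1).log (ne_of_gt (hφpos s hs))
  have hgcont : ContinuousOn g (Set.Icc 0 T) := by
    apply ContinuousOn.div
    · exact hu.continuous.comp_continuousOn (hφcont.prodMk continuousOn_id)
    · exact hφcont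
    · exact fun s hs => ne_of_gt (hφpos s hs)
  have hgint : IntervalIntegrable g MeasureTheory.volume 0 T :=
    (hgcont.mono (by rw [Set.uIcc_of_le hT])).intervalIntegrable
  have hftc : ∫ s in (0:ℝ)..T, g s = Real.log (φ T) - Real.log x := by
    rw [← hφ0]
    exact integral_eq_sub_of_hasDerivAt
      (fun s hs => hgd s (by rwa [Set.uIcc_of_le hT] at hs)) hgint
  -- integrability of M
  have hMint : IntervalIntegrable M MeasureTheory.volume 0 T := by
    apply IntervalIntegrable.mono_fun'
      (g := fun s => -a s / x ^ 2)
      (((ha_cont.neg).div_const (x ^ 2)).intervalIntegrable 0 T)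
      hM_meas.aestronglyMeasurable
    rw [Filter.EventuallyLE, MeasureTheory.ae_restrict_iff' measurableSet_uIoc]
    apply MeasureTheory.ae_of_all
    intro s hs
    rw [Set.uIoc_of_le hT] at hs
    have h1 := hstand s hs.1.le
    have h2 := hM_nonneg s
    rw [Real.norm_eq_abs, abs_of_nonneg h2]
    rw [le_div_iff₀ (by positivity)]
    linarith
  have hint_lower : IntervalIntegrable (fun s => a s - x ^ 2 * M s / 6)
      MeasureTheory.volume 0 T :=
    (ha_cont.intervalIntegrable 0 T).sub (((hMint.const_mul (x ^ 2)).div_const 6))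
  have hint_upper : IntervalIntegrable (fun s => a s + x ^ 2 * M s / 6)
      MeasureTheory.volume 0 T :=
    (ha_cont.intervalIntegrable 0 T).add (((hMint.const_mul (x ^ 2)).div_const 6))
  -- pointwise bounds for g
  have hgbound : ∀ s ∈ Set.Icc (0:ℝ) T,
      a s - x ^ 2 * M s / 6 ≤ g s ∧ g s ≤ a s + x ^ 2 * M s / 6 := by
    intro s hs
    have hy := hφpos s hs
    have hyx := hφle s hs
    have hcb := my_cubic_bound hu hu_odd s (hM3 s) (φ s)
    rw [abs_of_pos hy] at hcb
    have hdiv : |g s - a s| ≤ M s * φ s ^ 2 / 6 := by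
      rw [hg_def]
      have : u (φ s) s / φ s - a s = (u (φ s) s - a s * φ s) / φ s := by
        field_simp
      rw [this, abs_div, abs_of_pos hy, div_le_iff₀ hy]
      calc |u (φ s) s - a s * φ s| ≤ M s * φ s ^ 3 / 6 := hcb
        _ = M s * φ s ^ 2 / 6 * φ s := by ring
    have hsq : M s * φ s ^ 2 ≤ M s * x ^ 2 := by
      apply mul_le_mul_of_nonneg_left _ (hM_nonneg s)
      nlinarith
    rw [abs_le] at hdiv
    constructor <;> nlinarith [hdiv.1, hdiv.2]
  -- integrate
  have hlow : ∫ s in (0:ℝ)..T, (a s - x ^ 2 * M s / 6) ≤ ∫ s in (0:ℝ)..T, g s :=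
    integral_mono_on hT hint_lower hgint (fun s hs => (hgbound s hs).1)
  have hupp : ∫ s in (0:ℝ)..T, g s ≤ ∫ s in (0:ℝ)..T, (a s + x ^ 2 * M s / 6) :=
    integral_mono_on hT hgint hint_upper (fun s hs => (hgbound s hs).2)
  have hlogφ : Real.log (φ T) = Real.log x + ∫ s in (0:ℝ)..T, g s := by
    rw [hftc]; ring
  have hφT : 0 < φ T := hφpos T ⟨hT, le_refl T⟩
  have hexp : φ T = x * Real.exp (∫ s in (0:ℝ)..T, g s) := by
    rw [← Real.exp_log hφT, hlogφ, Real.exp_add, Real.exp_log hx]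
  have hgoal_eq_low : (fun s => deriv (fun z => u z s) 0 -
      x ^ 2 * (⨆ y : ℝ, |iteratedDeriv 3 (fun z => u z s) y|) / 6)
      = fun s => a s - x ^ 2 * M s / 6 := by
    funext s; rw [ha_eq s, hM_eq s]
  have hgoal_eq_upp : (fun s => deriv (fun z => u z s) 0 +
      x ^ 2 * (⨆ y : ℝ, |iteratedDeriv 3 (fun z => u z s) y|) / 6)
      = fun s => a s + x ^ 2 * M s / 6 := by
    funext s; rw [ha_eq s, hM_eq s]
  rw [abs_of_pos hx, abs_of_pos hφT]
  constructor
  · rw [show (∫ s in (0:ℝ)..T, (deriv (fun z => u z s) 0 -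
        x ^ 2 * (⨆ y : ℝ, |iteratedDeriv 3 (fun z => u z s) y|) / 6))
        = ∫ s in (0:ℝ)..T, (a s - x ^ 2 * M s / 6) from by rw [hgoal_eq_low]]
    rw [hexp]
    exact mul_le_mul_of_nonneg_left (Real.exp_le_exp.2 hlow) hx.le
  · rw [show (∫ s in (0:ℝ)..T, (deriv (fun z => u z s) 0 +
        x ^ 2 * (⨆ y : ℝ, |iteratedDeriv 3 (fun z => u z s) y|) / 6))
        = ∫ s in (0:ℝ)..T, (a s + x ^ 2 * M s / 6) from by rw [hgoal_eq_upp]]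
    rw [hexp]
    exact mul_le_mul_of_nonneg_left (Real.exp_le_exp.2 hupp) hx.le

end Main

/-- Let `u : ℝ × [0,∞) → ℝ` be smooth and odd in its first (spatial) variable,
and suppose (standing assumption) that for all `t ≥ 0`,
`x² · sup_y |∂₁³u(y,t)| ≤ −∂₁u(0,t)`.  Then any solution `φ` of the ODE
`φ(0) = x`, `φ'(t) = u(φ(t), t)` satisfies, for all `t ≥ 0`, the two-sided exponential bound
`|x|·exp ∫₀ᵗ (∂₁u(0,s) − x² sup|∂₁³u(·,s)|/6) ds ≤ |φ(t)|
  ≤ |x|·exp ∫₀ᵗ (∂₁u(0,s) + x² sup|∂₁³u(·,s)|/6) ds`. -/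
theorem ode_solution_two_sided_exponential_bound
    (u : ℝ → ℝ → ℝ)
    (hu_smooth : ContDiff ℝ (⊤ : ℕ∞) (fun p : ℝ × ℝ => u p.1 p.2))
    (hu_odd : ∀ y t : ℝ, u (-y) t = -u y t)
    (hbdd : ∀ t : ℝ, BddAbove (Set.range fun y => |iteratedDeriv 3 (fun z => u z t) y|))
    (x : ℝ)
    (hstanding : ∀ t : ℝ, 0 ≤ t →
      x ^ 2 * (⨆ y : ℝ, |iteratedDeriv 3 (fun z => u z t) y|) ≤ -(deriv (fun z => u z t) 0))
    (φ : ℝ → ℝ)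
    (hφ0 : φ 0 = x)
    (hφode : ∀ t : ℝ, 0 ≤ t → HasDerivAt φ (u (φ t) t) t) :
    ∀ t : ℝ, 0 ≤ t →
      |x| * Real.exp (∫ s in (0:ℝ)..t,
          (deriv (fun z => u z s) 0 -
            x ^ 2 * (⨆ y : ℝ, |iteratedDeriv 3 (fun z => u z s) y|) / 6)) ≤ |φ t| ∧
      |φ t| ≤ |x| * Real.exp (∫ s in (0:ℝ)..t,
          (deriv (fun z => u z s) 0 +
            x ^ 2 * (⨆ y : ℝ, |iteratedDeriv 3 (fun z => u z s) y|) / 6)) := by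
  intro T hT
  rcases lt_trichotomy x 0 with hx | hx | hx
  · -- x < 0 : apply the positive case to -φ
    have hψode : ∀ t : ℝ, 0 ≤ t → HasDerivAt (fun t => -φ t) (u (-φ t) t) t := by
      intro t ht
      have := (hφode t ht).neg
      rwa [← hu_odd (φ t) t] at this
    have h := pos_case hu_smooth hu_odd hbdd (x := -x) (by linarith)
      (by intro t ht; rw [neg_sq]; exact hstanding t ht)
      (φ := fun t => -φ t) (by simp [hφ0]) hψode T hT
    rcases h with ⟨h1, h2⟩
    simp only [neg_sq, abs_neg] at h1 h2
    exact ⟨h1, h2⟩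
  · -- x = 0 : the solution is identically zero
    have hφcont : ContinuousOn φ (Set.Icc 0 T) :=
      fun s hs => ((hφode s hs.1).continuousAt).continuousWithinAt
    obtain ⟨R, hR⟩ : ∃ R, ∀ s ∈ Set.Icc (0:ℝ) T, ‖φ s‖ ≤ R :=
      isCompact_Icc.exists_bound_of_continuousOn hφcont
    have hR0 : 0 ≤ R := le_trans (norm_nonneg _) (hR 0 ⟨le_refl 0, hT⟩)
    obtain ⟨K, hK⟩ : ∃ K, ∀ p ∈ (Set.Icc (-R) R) ×ˢ (Set.Icc (0:ℝ) T), ‖myU1 u p‖ ≤ K :=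
      (isCompact_Icc.prod isCompact_Icc).exists_bound_of_continuousOn
        (myU1_contDiff hu_smooth).continuous.continuousOn
    set K0 : ℝ := max K 0 with hK0_def
    have hLip : ∀ s ∈ Set.Icc (0:ℝ) T, ∀ y ∈ Set.Icc (-R) R, |u y s| ≤ K0 * |y| := by
      intro s hs y hy
      have h0mem : (0:ℝ) ∈ Set.Icc (-R) R := by constructor <;> linarith
      have := Convex.norm_image_sub_le_of_norm_hasDerivWithin_le
        (f := fun z => u z s) (f' := fun z => myU1 u (z, s)) (C := K0)
        (fun z _ => (my_hD1 hu_smooth s z).hasDerivWithinAt)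
        (fun z hz => le_trans (hK (z, s) ⟨hz, hs⟩) (le_max_left _ _))
        (convex_Icc _ _) h0mem hy
      simpa [my_u_zero hu_odd s, Real.norm_eq_abs] using this
    have hgr := norm_le_gronwallBound_of_norm_deriv_right_le
      (f := φ) (f' := fun s => u (φ s) s) (δ := 0) (K := K0) (ε := 0)
      (a := 0) (b := T) hφcont
      (fun s hs => (hφode s hs.1).hasDerivWithinAt)
      (by rw [hφ0, hx]; simp)
      (by
        intro s hs
        have hs' : s ∈ Set.Icc (0:ℝ) T := ⟨hs.1, hs.2.le⟩
        have hrange : φ s ∈ Set.Icc (-R) R := by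
          have := hR s hs'
          rw [Real.norm_eq_abs, abs_le] at this
          exact this
        have := hLip s hs' (φ s) hrange
        rw [Real.norm_eq_abs, Real.norm_eq_abs]
        linarith)
    have hφT := hgr T ⟨hT, le_refl T⟩
    rw [gronwallBound_ε0, zero_mul] at hφT
    rw [Real.norm_eq_abs] at hφT
    have hφT0 : |φ T| = 0 := le_antisymm hφT (abs_nonneg _)
    constructor
    · rw [hx, abs_zero, zero_mul]
      exact abs_nonneg _
    · rw [hx, abs_zero, zero_mul, hφT0]
  · -- x > 0
    exact pos_case hu_smooth hu_odd hbdd hx hstanding hφ0 hφode T hT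
end

section
/- Under the standing assumption, for all t ≥ 0 the spatial derivative of the solution satisfies exp ∫₀^t ( ∂₁u(0,s) − x² sup|∂₁³u(·,s)|/2 ) ds ≤ ∂_xφ(x,t) ≤ exp ∫₀^t ( ∂₁u(0,s) + x² sup|∂₁³u(·,s)|/2 ) ds ≤ 1. -/
open Real intervalIntegral

open Set ContDiff MeasureTheory

-- one-sided monotonicity helper
lemma aux_one_sided {f : ℝ → ℝ} (hf : Differentiable ℝ f) {M : ℝ}
    (h : ∀ z, 0 ≤ z → deriv f z ≤ M * z) {y : ℝ} (hy : 0 ≤ y) :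
    f y - f 0 ≤ M * y ^ 2 / 2 := by
  set g : ℝ → ℝ := fun z => M * z ^ 2 / 2 - f z with hg
  have hgd : ∀ z, HasDerivAt g (M * z - deriv f z) z := by
    intro z
    have h1 : HasDerivAt (fun z : ℝ => M * z ^ 2 / 2) (M * z) z := by
      have := ((hasDerivAt_pow 2 z).const_mul M).div_const 2
      simpa using this.congr_deriv (by ring)
    exact h1.sub (hf z).hasDerivAt
  have hmono : MonotoneOn g (Ici 0) := by
    apply monotoneOn_of_deriv_nonneg (convex_Ici 0)
      (fun z _ => (hgd z).differentiableAt.continuousAt.continuousWithinAt)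
      (fun z hz => (hgd z).differentiableAt.differentiableWithinAt)
    intro z hz
    rw [interior_Ici] at hz
    rw [(hgd z).deriv]
    have := h z hz.le
    linarith
  have := hmono (self_mem_Ici) hy hy
  simp only [g] at this
  nlinarith [this]

lemma aux_sq_bound {f : ℝ → ℝ} (hf : Differentiable ℝ f) {M : ℝ}
    (h : ∀ z, |deriv f z| ≤ M * |z|) (y : ℝ) : |f y - f 0| ≤ M * y ^ 2 / 2 := by
  have key : ∀ (f : ℝ → ℝ), Differentiable ℝ f → (∀ z, |deriv f z| ≤ M * |z|) →
      ∀ y, 0 ≤ y → |f y - f 0| ≤ M * y ^ 2 / 2 := by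
    intro f hf h y hy
    have h1 : f y - f 0 ≤ M * y ^ 2 / 2 := by
      apply aux_one_sided hf _ hy
      intro z hz
      calc deriv f z ≤ |deriv f z| := le_abs_self _
        _ ≤ M * |z| := h z
        _ = M * z := by rw [abs_of_nonneg hz]
    have h2 : (-f) y - (-f) 0 ≤ M * y ^ 2 / 2 := by
      apply aux_one_sided hf.neg _ hy
      intro z hz
      rw [deriv.neg]
      calc -deriv f z ≤ |deriv f z| := neg_le_abs _
        _ ≤ M * |z| := h z
        _ = M * z := by rw [abs_of_nonneg hz]
    simp only [Pi.neg_apply] at h2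
    rw [abs_le]; constructor <;> linarith
  rcases le_total 0 y with hy | hy
  · exact key f hf h y hy
  · have hneg : ∀ z, |deriv (fun z => f (-z)) z| ≤ M * |z| := by
      intro z
      have hd : HasDerivAt (fun z : ℝ => f (-z)) (deriv f (-z) * (-1)) z :=
        (hf (-z)).hasDerivAt.comp z (hasDerivAt_neg z)
      rw [hd.deriv]
      simpa [abs_neg] using h (-z)
    have := key (fun z => f (-z)) (hf.comp (differentiable_neg)) hneg (-y) (by linarith)
    simpa using this

lemma taylor_facts (v : ℝ → ℝ) (hv : ContDiff ℝ ∞ v) (hodd : ∀ y, v (-y) = -v y)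
    (hb : BddAbove (Set.range fun y => |iteratedDeriv 3 v y|)) :
    (∀ z, |deriv v z - deriv v 0| ≤ (⨆ y, |iteratedDeriv 3 v y|) * z ^ 2 / 2) ∧
    (∀ y, y * v y ≤ deriv v 0 * y ^ 2 + (⨆ y, |iteratedDeriv 3 v y|) * y ^ 4 / 6) := by
  set M := ⨆ y, |iteratedDeriv 3 v y| with hM
  have hMle : ∀ z, |iteratedDeriv 3 v z| ≤ M := fun z => le_ciSup hb z
  have hM0 : 0 ≤ M := (abs_nonneg _).trans (hMle 0)
  have hvd : Differentiable ℝ v := hv.differentiable (by simp)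
  have hf1 : ContDiff ℝ ∞ (deriv v) := (contDiff_infty_iff_deriv.mp hv).2
  have hf2 : ContDiff ℝ ∞ (deriv (deriv v)) := (contDiff_infty_iff_deriv.mp hf1).2
  -- third derivative is iteratedDeriv 3
  have hiter : iteratedDeriv 3 v = deriv (deriv (deriv v)) := by
    rw [show (3 : ℕ) = 2 + 1 from rfl, iteratedDeriv_succ,
      show (2 : ℕ) = 1 + 1 from rfl, iteratedDeriv_succ, iteratedDeriv_one]
  -- deriv v is even
  have heven : ∀ y, deriv v (-y) = deriv v y := by
    intro y
    have h1 : HasDerivAt (fun z : ℝ => v (-z)) (deriv v (-y) * (-1)) y :=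
      (hvd (-y)).hasDerivAt.comp y (hasDerivAt_neg y)
    have h2 : HasDerivAt (fun z : ℝ => -v z) (-deriv v y) y := (hvd y).hasDerivAt.neg
    have h3 : (fun z : ℝ => v (-z)) = fun z : ℝ => -v z := funext hodd
    rw [h3] at h1
    have := h1.unique h2
    linarith
  -- deriv (deriv v) is odd, hence vanishes at 0
  have hodd2 : deriv (deriv v) 0 = 0 := by
    have h1 : HasDerivAt (fun z : ℝ => deriv v (-z)) (deriv (deriv v) (-0) * (-1)) 0 :=
      ((hf1.differentiable (by simp)) (-0)).hasDerivAt.comp 0 (hasDerivAt_neg 0)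
    have h2 : HasDerivAt (fun z : ℝ => deriv v z) (deriv (deriv v) 0) 0 :=
      ((hf1.differentiable (by simp)) 0).hasDerivAt
    have h3 : (fun z : ℝ => deriv v (-z)) = fun z : ℝ => deriv v z := funext heven
    rw [h3] at h1
    have := h1.unique h2
    simp only [neg_zero] at this
    linarith
  -- |deriv (deriv v) z| ≤ M * |z|
  have hd2 : ∀ z, |deriv (deriv v) z| ≤ M * |z| := by
    intro z
    have h := Convex.norm_image_sub_le_of_norm_deriv_le (s := univ) (f := deriv (deriv v))
      (fun w _ => (hf2.differentiable (by simp)) w)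
      (fun w _ => by rw [Real.norm_eq_abs, ← hiter]; exact hMle w)
      convex_univ (mem_univ 0) (mem_univ z)
    simpa [Real.norm_eq_abs, hodd2] using h
  -- first conclusion
  have hA : ∀ z, |deriv v z - deriv v 0| ≤ M * z ^ 2 / 2 :=
    aux_sq_bound (hf1.differentiable (by simp)) hd2
  refine ⟨hA, ?_⟩
  -- second conclusion
  have hv0 : v 0 = 0 := by have := hodd 0; simp at this; linarith
  set k : ℝ → ℝ := fun z => deriv v 0 * z + M * z ^ 3 / 6 - v z with hk
  have hkd : ∀ z, HasDerivAt k (deriv v 0 + M * z ^ 2 / 2 - deriv v z) z := by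
    intro z
    have h1 : HasDerivAt (fun z : ℝ => deriv v 0 * z) (deriv v 0) z := by
      simpa using (hasDerivAt_id z).const_mul (deriv v 0)
    have h2 : HasDerivAt (fun z : ℝ => M * z ^ 3 / 6) (M * z ^ 2 / 2) z := by
      have := ((hasDerivAt_pow 3 z).const_mul M).div_const 6
      exact this.congr_deriv (by ring)
    exact ((h1.add h2).sub (hvd z).hasDerivAt).congr_deriv (by ring)
  have hkmono : Monotone k := by
    apply monotone_of_deriv_nonneg (fun z => (hkd z).differentiableAt)
    intro z
    rw [(hkd z).deriv]
    have := (abs_le.mp (hA z)).2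
    linarith
  intro y
  rcases le_total 0 y with hy | hy
  · have : k 0 ≤ k y := hkmono hy
    simp only [k, hv0] at this
    nlinarith
  · have : k y ≤ k 0 := hkmono hy
    simp only [k, hv0] at this
    nlinarith

lemma slice_fst {E : Type*} [NormedAddCommGroup E] [NormedSpace ℝ E]
    (V : ℝ × ℝ → E) (hV : Differentiable ℝ V) (y s : ℝ) :
    HasDerivAt (fun z => V (z, s)) (fderiv ℝ V (y, s) (1, 0)) y :=
  (hV (y, s)).hasFDerivAt.comp_hasDerivAt y ((hasDerivAt_id y).prodMk (hasDerivAt_const y s))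

lemma slice_snd {E : Type*} [NormedAddCommGroup E] [NormedSpace ℝ E]
    (V : ℝ × ℝ → E) (hV : Differentiable ℝ V) (y s : ℝ) :
    HasDerivAt (fun t => V (y, t)) (fderiv ℝ V (y, s) (0, 1)) s :=
  (hV (y, s)).hasFDerivAt.comp_hasDerivAt s ((hasDerivAt_const s y).prodMk (hasDerivAt_id s))

lemma rat_sup (g : ℝ → ℝ) (hg : Continuous g) (hb : BddAbove (Set.range g)) :
    (⨆ y : ℝ, g y) = ⨆ q : ℚ, g (q : ℝ) := by
  have hb' : BddAbove (Set.range fun q : ℚ => g (q : ℝ)) :=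
    hb.mono (Set.range_comp_subset_range _ g)
  apply le_antisymm
  · apply ciSup_le
    intro y
    refine le_of_forall_pos_le_add (fun ε hε => ?_)
    obtain ⟨δ, hδ, hcont⟩ := Metric.continuous_iff.mp hg y ε hε
    obtain ⟨q, hq⟩ := exists_rat_near y hδ
    have h1 : dist ((q : ℝ)) y < δ := by rw [dist_comm, Real.dist_eq]; exact hq
    have h2 := hcont _ h1
    rw [Real.dist_eq, abs_lt] at h2
    have h3 : g (q : ℝ) ≤ ⨆ q : ℚ, g (q : ℝ) := le_ciSup hb' q
    linarith
  · exact ciSup_le fun q => le_ciSup hb _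


/-- Let `u : ℝ × [0,∞) → ℝ` be smooth and odd in its first (spatial) variable,
and suppose (standing assumption) that for all `t ≥ 0`,
`x² · sup_y |∂₁³u(y,t)| ≤ −∂₁u(0,t)`.  Let `φ(y,t)` be the solution of the ODE
`φ(y,0) = y`, `∂_tφ(y,t) = u(φ(y,t), t)`, depending smoothly on the initial datum `y`.
Then for all `t ≥ 0` the spatial derivative satisfies
`exp ∫₀ᵗ (∂₁u(0,s) − x² sup|∂₁³u(·,s)|/2) ds ≤ ∂_xφ(x,t)
  ≤ exp ∫₀ᵗ (∂₁u(0,s) + x² sup|∂₁³u(·,s)|/2) ds ≤ 1`. -/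
theorem ode_flow_first_derivative_bounds
    (u : ℝ → ℝ → ℝ)
    (hu_smooth : ContDiff ℝ (⊤ : ℕ∞) (fun p : ℝ × ℝ => u p.1 p.2))
    (hu_odd : ∀ y t : ℝ, u (-y) t = -u y t)
    (hbdd : ∀ t : ℝ, BddAbove (Set.range fun y => |iteratedDeriv 3 (fun z => u z t) y|))
    (x : ℝ)
    (hstanding : ∀ t : ℝ, 0 ≤ t →
      x ^ 2 * (⨆ y : ℝ, |iteratedDeriv 3 (fun z => u z t) y|) ≤ -(deriv (fun z => u z t) 0))
    (φ : ℝ → ℝ → ℝ)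
    (hφ_smooth : ContDiff ℝ (⊤ : ℕ∞) (fun p : ℝ × ℝ => φ p.1 p.2))
    (hφ0 : ∀ y : ℝ, φ y 0 = y)
    (hφode : ∀ (y t : ℝ), 0 ≤ t → HasDerivAt (φ y) (u (φ y t) t) t) :
    ∀ t : ℝ, 0 ≤ t →
      Real.exp (∫ s in (0:ℝ)..t,
          (deriv (fun z => u z s) 0 -
            x ^ 2 * (⨆ y : ℝ, |iteratedDeriv 3 (fun z => u z s) y|) / 2))
        ≤ deriv (fun y => φ y t) x ∧
      deriv (fun y => φ y t) x
        ≤ Real.exp (∫ s in (0:ℝ)..t,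
          (deriv (fun z => u z s) 0 +
            x ^ 2 * (⨆ y : ℝ, |iteratedDeriv 3 (fun z => u z s) y|) / 2)) ∧
      Real.exp (∫ s in (0:ℝ)..t,
          (deriv (fun z => u z s) 0 +
            x ^ 2 * (⨆ y : ℝ, |iteratedDeriv 3 (fun z => u z s) y|) / 2)) ≤ 1 := by
  have hU : ContDiff ℝ ∞ (fun p : ℝ × ℝ => u p.1 p.2) := hu_smooth.of_le (by simp)
  have hΦ : ContDiff ℝ ∞ (fun p : ℝ × ℝ => φ p.1 p.2) := hφ_smooth.of_le (by simp)
  have hUd : Differentiable ℝ (fun p : ℝ × ℝ => u p.1 p.2) :=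
    hU.differentiable (by simp)
  have hΦd : Differentiable ℝ (fun p : ℝ × ℝ => φ p.1 p.2) :=
    hΦ.differentiable (by simp)
  set G : ℝ × ℝ → ℝ := fun p => fderiv ℝ (fun p : ℝ × ℝ => u p.1 p.2) p (1, 0) with hGdef
  have hGsm : ContDiff ℝ ∞ G := by
    apply ContDiff.clm_apply _ contDiff_const
    exact hU.fderiv_right (by simp)
  have hGc : Continuous G := hGsm.continuous
  have hG : ∀ y s : ℝ, HasDerivAt (fun z => u z s) (G (y, s)) y := fun y s =>
    slice_fst (fun p : ℝ × ℝ => u p.1 p.2) hUd y s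
  have hus : ∀ s : ℝ, ContDiff ℝ ∞ (fun z => u z s) := fun s =>
    hU.comp (contDiff_id.prodMk contDiff_const)
  -- notation
  set f₀ : ℝ → ℝ := fun s => deriv (fun z => u z s) 0 with hf₀def
  set Ms : ℝ → ℝ := fun s => ⨆ y, |iteratedDeriv 3 (fun z => u z s) y| with hMsdef
  have hf₀G : ∀ s, f₀ s = G (0, s) := fun s => (hG 0 s).deriv
  have hf₀c : Continuous f₀ := by
    have : f₀ = fun s => G (0, s) := funext hf₀G
    rw [this]
    exact hGc.comp (continuous_const.prodMk continuous_id)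
  have hM0 : ∀ s, 0 ≤ Ms s := fun s =>
    (abs_nonneg _).trans (le_ciSup (hbdd s) 0)
  have hsM : ∀ s, 0 ≤ s → x ^ 2 * Ms s ≤ -f₀ s := hstanding
  have hf₀nonpos : ∀ s, 0 ≤ s → f₀ s ≤ 0 := by
    intro s hs
    have := hsM s hs
    nlinarith [hM0 s, sq_nonneg x]
  -- taylor facts
  have htay := fun s : ℝ => taylor_facts (fun z => u z s) (hus s) (fun y => hu_odd y s) (hbdd s)
  -- w and its basic properties
  set w : ℝ → ℝ := fun t => fderiv ℝ (fun p : ℝ × ℝ => φ p.1 p.2) (x, t) (1, 0) with hwdef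
  have hw : ∀ t : ℝ, HasDerivAt (fun y => φ y t) (w t) x := fun t =>
    slice_fst (fun p : ℝ × ℝ => φ p.1 p.2) hΦd x t
  have hw0 : w 0 = 1 := by
    have h1 := (hw 0).deriv
    have h2 : (fun y => φ y 0) = fun y : ℝ => y := funext hφ0
    rw [h2, deriv_id''] at h1
    exact h1.symm
  have hwcont : Continuous w := by
    have : Continuous (fderiv ℝ (fun p : ℝ × ℝ => φ p.1 p.2)) :=
      (hΦ.fderiv_right (by simp : (∞ : WithTop ℕ∞) + 1 ≤ ∞)).continuous
    exact (this.comp (continuous_const.prodMk continuous_id)).clm_apply continuous_const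
  -- the coefficient a
  set a : ℝ → ℝ := fun s => G (φ x s, s) with hadef
  have hφxc : Continuous (φ x) := by
    have : Continuous (fun t => (fun p : ℝ × ℝ => φ p.1 p.2) (x, t)) :=
      hΦ.continuous.comp (continuous_const.prodMk continuous_id)
    exact this
  have hacont : Continuous a := hGc.comp (hφxc.prodMk continuous_id)
  have haval : ∀ s, a s = deriv (fun z => u z s) (φ x s) := fun s => ((hG (φ x s) s).deriv).symm
  -- the ODE for w
  have hFsm : ContDiff ℝ ∞ (fderiv ℝ (fun p : ℝ × ℝ => φ p.1 p.2)) :=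
    hΦ.fderiv_right (by simp)
  have hFd : Differentiable ℝ (fderiv ℝ (fun p : ℝ × ℝ => φ p.1 p.2)) :=
    hFsm.differentiable (by simp)
  have hw' : ∀ s : ℝ, 0 ≤ s → HasDerivAt w (a s * w s) s := by
    intro s hs
    set F := fderiv ℝ (fun p : ℝ × ℝ => φ p.1 p.2) with hFdef
    set D := fderiv ℝ F (x, s) with hDdef
    have hD : HasFDerivAt F D (x, s) := (hFd (x, s)).hasFDerivAt
    -- derivative of w in t-direction
    have hc : HasDerivAt (fun t => F (x, t)) (D (0, 1)) s :=
      hD.comp_hasDerivAt s ((hasDerivAt_const s x).prodMk (hasDerivAt_id s))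
    have hw1 : HasDerivAt w (D (0, 1) (1, 0)) s := by
      have := hc.clm_apply (hasDerivAt_const s ((1:ℝ), (0:ℝ)))
      simpa using this
    -- symmetry of second derivative
    have hsymm : D (0, 1) (1, 0) = D (1, 0) (0, 1) :=
      second_derivative_symmetric (fun p => (hΦd p).hasFDerivAt) hD (0, 1) (1, 0)
    -- compute D (1,0) (0,1) via the ODE
    have hc2 : HasDerivAt (fun y => F (y, s)) (D (1, 0)) x :=
      hD.comp_hasDerivAt x ((hasDerivAt_id x).prodMk (hasDerivAt_const x s))
    have hx2 : HasDerivAt (fun y => F (y, s) ((0:ℝ), (1:ℝ))) (D (1, 0) (0, 1)) x := by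
      have := hc2.clm_apply (hasDerivAt_const x ((0:ℝ), (1:ℝ)))
      simpa using this
    have hid : (fun y => F (y, s) ((0:ℝ), (1:ℝ))) = fun y => u (φ y s) s := by
      funext y
      have h1 : HasDerivAt (φ y) (F (y, s) (0, 1)) s :=
        slice_snd (fun p : ℝ × ℝ => φ p.1 p.2) hΦd y s
      exact h1.unique (hφode y s hs)
    rw [hid] at hx2
    have hchain : HasDerivAt (fun y => u (φ y s) s) (G (φ x s, s) * w s) x := by
      have h1 : HasDerivAt (fun z => u z s) (G (φ x s, s)) (φ x s) := hG (φ x s) s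
      have := h1.comp x (hw s)
      exact this
    have hkey : D (1, 0) (0, 1) = G (φ x s, s) * w s := hx2.unique hchain
    have : D (0, 1) (1, 0) = a s * w s := by rw [hsymm, hkey]
    rw [this] at hw1
    exact hw1
  -- solve for w
  have hwt : ∀ t : ℝ, 0 ≤ t → w t = Real.exp (∫ s in (0:ℝ)..t, a s) := by
    have hA : ∀ s : ℝ, HasDerivAt (fun r => ∫ σ in (0:ℝ)..r, a σ) (a s) s := fun s =>
      (hacont.integral_hasStrictDerivAt 0 s).hasDerivAt
    set A : ℝ → ℝ := fun r => ∫ σ in (0:ℝ)..r, a σ with hAdef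
    have hg' : ∀ s : ℝ, 0 ≤ s → HasDerivAt (fun r => w r * Real.exp (-A r)) 0 s := by
      intro s hs
      have hexp : HasDerivAt (fun r => Real.exp (-A r)) (Real.exp (-A s) * (-a s)) s :=
        ((hA s).neg).exp
      have := (hw' s hs).mul hexp
      exact this.congr_deriv (by ring)
    intro t ht
    have hcont : ContinuousOn (fun r => w r * Real.exp (-A r)) (Icc 0 t) := by
      apply Continuous.continuousOn
      have hAcont : Continuous A := by
        have : Differentiable ℝ A := fun s => (hA s).differentiableAt
        exact this.continuous
      exact hwcont.mul (hAcont.neg.rexp)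
    have hconst := constant_of_has_deriv_right_zero hcont
      (fun r hr => ((hg' r hr.1).hasDerivWithinAt))
    have h1 := hconst t (right_mem_Icc.mpr ht)
    have hA0 : A 0 = 0 := integral_same
    rw [hA0, hw0] at h1
    simp only [neg_zero, Real.exp_zero, mul_one] at h1
    have hexp_ne : Real.exp (-A t) ≠ 0 := Real.exp_ne_zero _
    have : w t = Real.exp (A t) := by
      have h2 : w t * Real.exp (-A t) = 1 := h1
      rw [Real.exp_neg] at h2
      field_simp at h2
      linarith [h2]
    exact this
  -- invariance
  have hψ : ∀ s : ℝ, 0 ≤ s → (φ x s) ^ 2 ≤ x ^ 2 := by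
    have hu0 : ∀ s : ℝ, u 0 s = 0 := by
      intro s; have := hu_odd 0 s; simp at this; linarith
    rcases eq_or_ne x 0 with hx0 | hx0
    · -- x = 0 : the solution stays at 0, by a Gronwall estimate
      subst hx0
      intro T hT
      obtain ⟨R, hR⟩ := (isCompact_Icc (a := (0:ℝ)) (b := T)).exists_bound_of_continuousOn
        hφxc.continuousOn
      obtain ⟨K, hK⟩ := ((isCompact_Icc (a := -R) (b := R)).prod
        (isCompact_Icc (a := (0:ℝ)) (b := T))).exists_bound_of_continuousOn hGc.continuousOn
      have hRnn : ∀ s ∈ Icc (0:ℝ) T, φ 0 s ∈ Icc (-R) R := by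
        intro s hs
        have := hR s hs
        rw [Real.norm_eq_abs, abs_le] at this
        exact this
      have key := norm_le_gronwallBound_of_norm_deriv_right_le (δ := 0) (K := K) (ε := 0)
        (f := φ 0) (f' := fun s => u (φ 0 s) s) (a := 0) (b := T)
        (hφxc.continuousOn)
        (fun s hs => (hφode 0 s hs.1).hasDerivWithinAt)
        (by simp [hφ0]) ?_ T (right_mem_Icc.mpr hT)
      · rw [gronwallBound_ε0_δ0] at key
        have : φ 0 T = 0 := by
          have := norm_le_zero_iff.mp key
          exact this
        simp [this]
      · intro s hs
        have hmem : φ 0 s ∈ Icc (-R) R := hRnn s (Ico_subset_Icc_self hs)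
        have h0mem : (0:ℝ) ∈ Icc (-R) R := by
          have h := hR 0 (left_mem_Icc.mpr hT)
          have h2 : (0:ℝ) ≤ R := le_trans (norm_nonneg _) h
          constructor <;> linarith
        have := Convex.norm_image_sub_le_of_norm_deriv_le (s := Icc (-R) R)
          (f := fun z => u z s)
          (fun z _ => (hG z s).differentiableAt)
          (fun z hz => by
            rw [(hG z s).deriv]
            exact hK (z, s) (Set.mk_mem_prod hz (Ico_subset_Icc_self hs)))
          (convex_Icc _ _) h0mem hmem
        simp only [hu0 s, sub_zero] at this
        linarith [this]
    · -- x ≠ 0 : barrier argument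
      have hx2 : (0:ℝ) < x ^ 2 := by
        have h1 : x ^ 2 ≠ 0 := pow_ne_zero 2 hx0
        exact lt_of_le_of_ne (sq_nonneg x) (Ne.symm h1)
      set ψ : ℝ → ℝ := fun s => (φ x s) ^ 2 with hψdef
      have hψc : Continuous ψ := hφxc.pow 2
      have hψ0 : ψ 0 = x ^ 2 := by simp [ψ, hφ0]
      have hψ' : ∀ s : ℝ, 0 ≤ s → HasDerivAt ψ (2 * φ x s * u (φ x s) s) s := by
        intro s hs
        exact ((hφode x s hs).pow 2).congr_deriv (by push_cast; ring)
      have hderiv_nonpos : ∀ s : ℝ, 0 ≤ s → ψ s ≤ 2 * x ^ 2 → deriv ψ s ≤ 0 := by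
        intro s hs h2x
        rw [(hψ' s hs).deriv]
        have key : φ x s * u (φ x s) s ≤
            f₀ s * (φ x s) ^ 2 + Ms s * (φ x s) ^ 4 / 6 := (htay s).2 (φ x s)
        have hP : (0:ℝ) ≤ (φ x s) ^ 2 := sq_nonneg _
        have h2x' : (φ x s) ^ 2 ≤ 2 * x ^ 2 := h2x
        have e1 : Ms s * (φ x s) ^ 4 ≤ Ms s * (φ x s) ^ 2 * (2 * x ^ 2) := by
          nlinarith [mul_le_mul_of_nonneg_left h2x' (mul_nonneg (hM0 s) hP)]
        have e2 : Ms s * (φ x s) ^ 2 * x ^ 2 ≤ (-(f₀ s)) * (φ x s) ^ 2 := by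
          nlinarith [hsM s hs, hP]
        nlinarith [key, hf₀nonpos s hs, hP]
      intro T hT
      by_contra hcon
      push_neg at hcon
      have hconψ : x ^ 2 < ψ T := hcon
      set A : Set ℝ := Icc 0 T ∩ ψ ⁻¹' (Iic (x ^ 2)) with hAdef
      have hA_cpt : IsCompact A := isCompact_Icc.inter_right (isClosed_Iic.preimage hψc)
      have hA_ne : A.Nonempty := ⟨0, left_mem_Icc.mpr hT, by simp [mem_preimage, hψ0]⟩
      set s₀ := sSup A with hs₀def
      have hs₀A : s₀ ∈ A := hA_cpt.sSup_mem hA_ne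
      have hs₀ : s₀ ∈ Icc 0 T := hs₀A.1
      have hψs₀le : ψ s₀ ≤ x ^ 2 := hs₀A.2
      have hs₀T : s₀ < T := by
        rcases lt_or_eq_of_le hs₀.2 with h | h
        · exact h
        · exfalso; rw [h] at hψs₀le; linarith [hconψ]
      have habove : ∀ s, s₀ < s → s ≤ T → x ^ 2 < ψ s := by
        intro s h1 h2
        by_contra h
        push_neg at h
        have hmem : s ∈ A := ⟨⟨le_trans hs₀.1 h1.le, h2⟩, h⟩
        have := le_csSup hA_cpt.bddAbove hmem
        linarith
      have hψs₀ : ψ s₀ = x ^ 2 := by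
        refine le_antisymm hψs₀le ?_
        have htend : Filter.Tendsto ψ (nhdsWithin s₀ (Ioi s₀)) (nhds (ψ s₀)) :=
          (hψc.tendsto s₀).mono_left nhdsWithin_le_nhds
        refine ge_of_tendsto htend ?_
        filter_upwards [Ioo_mem_nhdsGT_of_mem (Set.mem_Ico.mpr ⟨le_refl s₀, hs₀T⟩)] with s hs
        exact (habove s hs.1 hs.2.le).le
      have hfinal : ∀ s₁ : ℝ, s₀ < s₁ → s₁ ≤ T → (∀ s, s₀ ≤ s → s < s₁ → ψ s < 2 * x ^ 2) →
          ψ s₁ ≤ x ^ 2 := by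
        intro s₁ h01 h1T hbelow
        have hanti : AntitoneOn ψ (Icc s₀ s₁) := by
          apply antitoneOn_of_deriv_nonpos (convex_Icc _ _) hψc.continuousOn
          · intro s hs
            exact (hψ' s (by rw [interior_Icc] at hs; linarith [hs₀.1, hs.1])).differentiableAt.differentiableWithinAt
          · intro s hs
            rw [interior_Icc] at hs
            have hs0 : (0:ℝ) ≤ s := by linarith [hs₀.1, hs.1]
            exact hderiv_nonpos s hs0 (hbelow s hs.1.le hs.2).le
        have := hanti (left_mem_Icc.mpr h01.le) (right_mem_Icc.mpr h01.le) h01.le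
        rw [hψs₀] at this
        exact this
      set B : Set ℝ := Icc s₀ T ∩ ψ ⁻¹' (Ici (2 * x ^ 2)) with hBdef
      by_cases hB : B.Nonempty
      · have hB_cpt : IsCompact B := isCompact_Icc.inter_right (isClosed_Ici.preimage hψc)
        set s₁ := sInf B with hs₁def
        have hs₁B : s₁ ∈ B := hB_cpt.sInf_mem hB
        have hs₁ : s₁ ∈ Icc s₀ T := hs₁B.1
        have hψs₁ : 2 * x ^ 2 ≤ ψ s₁ := hs₁B.2
        have h01 : s₀ < s₁ := by
          rcases lt_or_eq_of_le hs₁.1 with h | h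
          · exact h
          · exfalso; rw [← h] at hψs₁; rw [hψs₀] at hψs₁; linarith
        have hbelow : ∀ s, s₀ ≤ s → s < s₁ → ψ s < 2 * x ^ 2 := by
          intro s hle hlt
          by_contra h
          push_neg at h
          have hmem : s ∈ B := ⟨⟨hle, le_trans hlt.le hs₁.2⟩, h⟩
          have := csInf_le hB_cpt.bddBelow hmem
          linarith
        have := hfinal s₁ h01 hs₁.2 hbelow
        linarith [hψs₁, hx2]
      · have hbelow : ∀ s, s₀ ≤ s → s < T → ψ s < 2 * x ^ 2 := by
          intro s hle hlt
          by_contra h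
          push_neg at h
          exact hB ⟨s, ⟨hle, hlt.le⟩, h⟩
        have := hfinal T hs₀T le_rfl hbelow
        linarith [hconψ]
  -- bounds on a
  have habnd : ∀ s : ℝ, 0 ≤ s →
      f₀ s - x ^ 2 * Ms s / 2 ≤ a s ∧ a s ≤ f₀ s + x ^ 2 * Ms s / 2 := by
    intro s hs
    have h1 := (htay s).1 (φ x s)
    rw [← haval s] at h1
    have h2 := abs_le.mp h1
    have h3 : Ms s * (φ x s) ^ 2 ≤ Ms s * x ^ 2 :=
      mul_le_mul_of_nonneg_left (hψ s hs) (hM0 s)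
    constructor <;> [nlinarith [h2.1]; nlinarith [h2.2]]
  -- measurability / integrability of Ms
  -- measurability of Ms via higher slice derivatives
  have hGd : Differentiable ℝ G := hGsm.differentiable (by simp)
  set G2 : ℝ × ℝ → ℝ := fun p => fderiv ℝ G p (1, 0) with hG2def
  have hG2sm : ContDiff ℝ ∞ G2 := (hGsm.fderiv_right (by simp)).clm_apply contDiff_const
  have hG2d : Differentiable ℝ G2 := hG2sm.differentiable (by simp)
  set G3 : ℝ × ℝ → ℝ := fun p => fderiv ℝ G2 p (1, 0) with hG3def
  have hG3sm : ContDiff ℝ ∞ G3 := (hG2sm.fderiv_right (by simp)).clm_apply contDiff_const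
  have hG3c : Continuous G3 := hG3sm.continuous
  have hG2' : ∀ y s : ℝ, HasDerivAt (fun z => G (z, s)) (G2 (y, s)) y := fun y s =>
    slice_fst G hGd y s
  have hG3' : ∀ y s : ℝ, HasDerivAt (fun z => G2 (z, s)) (G3 (y, s)) y := fun y s =>
    slice_fst G2 hG2d y s
  have hiterfun : ∀ s : ℝ,
      (fun y => |iteratedDeriv 3 (fun z => u z s) y|) = fun y => |G3 (y, s)| := by
    intro s
    have h1 : deriv (fun z => u z s) = fun z => G (z, s) := funext fun z => (hG z s).deriv
    have h2 : deriv (fun z => G (z, s)) = fun z => G2 (z, s) := funext fun z => (hG2' z s).deriv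
    have h3 : deriv (fun z => G2 (z, s)) = fun z => G3 (z, s) := funext fun z => (hG3' z s).deriv
    funext y
    rw [show (3:ℕ) = 2 + 1 from rfl, iteratedDeriv_succ, show (2:ℕ) = 1 + 1 from rfl,
      iteratedDeriv_succ, iteratedDeriv_one, h1, h2, h3]
  have hMsmeas : Measurable Ms := by
    have hMseq : Ms = fun s => ⨆ q : ℚ, |G3 ((q : ℝ), s)| := by
      funext s
      have hbb : BddAbove (Set.range fun y => |G3 (y, s)|) := by
        have := hbdd s
        rwa [hiterfun s] at this
      have hcont : Continuous (fun y => |G3 (y, s)|) :=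
        (hG3c.comp (continuous_id.prodMk continuous_const)).abs
      have h1 : Ms s = ⨆ y, |G3 (y, s)| := by
        show (⨆ y, |iteratedDeriv 3 (fun z => u z s) y|) = _
        rw [show (fun y => |iteratedDeriv 3 (fun z => u z s) y|) = fun y => |G3 (y, s)| from
          hiterfun s]
      rw [h1]
      exact rat_sup _ hcont hbb
    rw [hMseq]
    exact Measurable.iSup fun q =>
      ((hG3c.comp (continuous_const.prodMk continuous_id)).abs).measurable
  have hMsInt : ∀ t : ℝ, 0 ≤ t →
      IntervalIntegrable (fun s => x ^ 2 * Ms s / 2) volume 0 t := by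
    intro t ht
    obtain ⟨C, hC⟩ := (isCompact_Icc (a := (0:ℝ)) (b := t)).exists_bound_of_continuousOn
      hf₀c.continuousOn
    rw [intervalIntegrable_iff, uIoc_of_le ht]
    have hgint : IntegrableOn (fun _ : ℝ => C / 2) (Ioc 0 t) volume :=
      (integrableOn_const_iff (by finiteness)).mpr (Or.inr measure_Ioc_lt_top)
    apply MeasureTheory.Integrable.mono' hgint
    · exact ((hMsmeas.const_mul (x ^ 2)).div_const 2).aestronglyMeasurable
    · refine (ae_restrict_iff' measurableSet_Ioc).mpr (Filter.Eventually.of_forall ?_)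
      intro s hs
      have h1 : 0 ≤ x ^ 2 * Ms s := mul_nonneg (sq_nonneg x) (hM0 s)
      have h2 := hsM s hs.1.le
      have h3 := hC s ⟨hs.1.le, hs.2⟩
      rw [Real.norm_eq_abs, abs_of_nonneg (div_nonneg h1 (by norm_num))]
      rw [Real.norm_eq_abs] at h3
      have h4 : -(f₀ s) ≤ |f₀ s| := neg_le_abs _
      linarith
  -- final assembly
  intro t ht
  have hintlow : IntervalIntegrable (fun s => f₀ s - x ^ 2 * Ms s / 2) volume 0 t :=
    (hf₀c.intervalIntegrable 0 t).sub (hMsInt t ht)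
  have hinthigh : IntervalIntegrable (fun s => f₀ s + x ^ 2 * Ms s / 2) volume 0 t :=
    (hf₀c.intervalIntegrable 0 t).add (hMsInt t ht)
  have hintA : IntervalIntegrable a volume 0 t := hacont.intervalIntegrable 0 t
  have hle1 : (∫ s in (0:ℝ)..t, (f₀ s - x ^ 2 * Ms s / 2)) ≤ ∫ s in (0:ℝ)..t, a s :=
    integral_mono_on ht hintlow hintA (fun s hs => (habnd s hs.1).1)
  have hle2 : (∫ s in (0:ℝ)..t, a s) ≤ ∫ s in (0:ℝ)..t, (f₀ s + x ^ 2 * Ms s / 2) :=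
    integral_mono_on ht hintA hinthigh (fun s hs => (habnd s hs.1).2)
  have hle3 : (∫ s in (0:ℝ)..t, (f₀ s + x ^ 2 * Ms s / 2)) ≤ 0 := by
    have hmono := integral_mono_on (μ := volume) (f := fun s => f₀ s + x ^ 2 * Ms s / 2)
      (g := fun _ => (0:ℝ)) ht hinthigh intervalIntegrable_const ?_
    · simpa using hmono
    · intro s hs
      have h1 := hsM s hs.1
      have h2 := hf₀nonpos s hs.1
      nlinarith [hM0 s]
  rw [(hw t).deriv, hwt t ht]
  refine ⟨Real.exp_le_exp.mpr hle1, Real.exp_le_exp.mpr hle2, ?_⟩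
  rw [Real.exp_le_one_iff]
  exact hle3
end

section
/- Under the standing assumption, for all t ≥ 0 the second spatial derivative of the solution satisfies |∂_{xx}φ(x,t)| ≤ |x| · ∫₀^t sup|∂₁³u(·,s)| ds. -/
open Real intervalIntegral

section helpers
variable {E : Type*} [NormedAddCommGroup E] [NormedSpace ℝ E]

lemma hasDerivAt_fst_param {H : ℝ × ℝ → E} (hH : Differentiable ℝ H) (y s : ℝ) :
    HasDerivAt (fun z => H (z, s)) (fderiv ℝ H (y, s) (1, 0)) y :=
  (hH (y, s)).hasFDerivAt.comp_hasDerivAt y ((hasDerivAt_id y).prodMk (hasDerivAt_const y s))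

lemma hasDerivAt_snd_param {H : ℝ × ℝ → E} (hH : Differentiable ℝ H) (y s : ℝ) :
    HasDerivAt (fun τ => H (y, τ)) (fderiv ℝ H (y, s) (0, 1)) s :=
  (hH (y, s)).hasFDerivAt.comp_hasDerivAt s ((hasDerivAt_const s y).prodMk (hasDerivAt_id s))

end helpers

lemma contDiff_fderiv_apply {Ψ : ℝ × ℝ → ℝ} (hΨ : ContDiff ℝ (⊤ : ℕ∞) Ψ) (v : ℝ × ℝ) :
    ContDiff ℝ (⊤ : ℕ∞) (fun p => fderiv ℝ Ψ p v) :=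
  (hΨ.fderiv_right (by simp)).clm_apply contDiff_const

lemma clairaut_aux {Ψ : ℝ × ℝ → ℝ} (hΨ : ContDiff ℝ (⊤ : ℕ∞) Ψ) (y s : ℝ) :
    HasDerivAt (fun τ => fderiv ℝ Ψ (y, τ) (1, 0))
      (deriv (fun z => fderiv ℝ Ψ (z, s) (0, 1)) y) s := by
  have hF : ContDiff ℝ (⊤ : ℕ∞) (fderiv ℝ Ψ) := hΨ.fderiv_right (by simp)
  set G := fderiv ℝ (fderiv ℝ Ψ) (y, s) with hG
  have h1 : HasDerivAt (fun τ => fderiv ℝ Ψ (y, τ)) (G (0, 1)) s :=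
    hasDerivAt_snd_param (hF.differentiable (by simp)) y s
  have h1' : HasDerivAt (fun τ => fderiv ℝ Ψ (y, τ) (1, 0)) (G (0, 1) (1, 0)) s := by
    simpa using h1.clm_apply (hasDerivAt_const s ((1 : ℝ), (0 : ℝ)))
  have h2 : HasDerivAt (fun z => fderiv ℝ Ψ (z, s)) (G (1, 0)) y :=
    hasDerivAt_fst_param (hF.differentiable (by simp)) y s
  have h2' : HasDerivAt (fun z => fderiv ℝ Ψ (z, s) (0, 1)) (G (1, 0) (0, 1)) y := by
    simpa using h2.clm_apply (hasDerivAt_const y ((0 : ℝ), (1 : ℝ)))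
  have hsymm : G (0, 1) (1, 0) = G (1, 0) (0, 1) :=
    second_derivative_symmetric (fun p => (hΨ.differentiable (by simp) p).hasFDerivAt)
      ((hF.differentiable (by simp) (y, s)).hasFDerivAt) _ _
  rw [h2'.deriv, ← hsymm]
  exact h1'

lemma abs_le_pow_of_abs_deriv_le {g : ℝ → ℝ} {C : ℝ} {n : ℕ}
    (hg : Differentiable ℝ g) (hg' : Continuous (deriv g)) (h0 : g 0 = 0)
    (hb : ∀ z, |deriv g z| ≤ C * |z| ^ n) (y : ℝ) :
    |g y| ≤ C * |y| ^ (n + 1) / (n + 1) := by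
  have key : ∀ (f : ℝ → ℝ), Differentiable ℝ f → Continuous (deriv f) → f 0 = 0 →
      (∀ z, |deriv f z| ≤ C * |z| ^ n) → ∀ w, 0 ≤ w → |f w| ≤ C * w ^ (n + 1) / (n + 1) := by
    intro f hf hf' hf0 hfb w hw
    have ftc : ∫ z in (0:ℝ)..w, deriv f z = f w - f 0 :=
      intervalIntegral.integral_deriv_eq_sub (fun z _ => hf z) (hf'.intervalIntegrable 0 w)
    have h1 : |f w| = |∫ z in (0:ℝ)..w, deriv f z| := by rw [ftc, hf0, sub_zero]
    rw [h1]
    have h2 : |∫ z in (0:ℝ)..w, deriv f z| ≤ ∫ z in (0:ℝ)..w, |deriv f z| := by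
      simpa [Real.norm_eq_abs] using intervalIntegral.norm_integral_le_integral_norm
        (f := deriv f) (μ := MeasureTheory.volume) (a := 0) (b := w) hw
    refine h2.trans ?_
    have h3 : (∫ z in (0:ℝ)..w, |deriv f z|) ≤ ∫ z in (0:ℝ)..w, C * z ^ n := by
      apply intervalIntegral.integral_mono_on hw
      · exact (hf'.abs).intervalIntegrable 0 w
      · exact (by continuity : Continuous fun z : ℝ => C * z ^ n).intervalIntegrable 0 w
      · intro z hz
        calc |deriv f z| ≤ C * |z| ^ n := hfb z
          _ = C * z ^ n := by rw [abs_of_nonneg hz.1]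
    refine h3.trans ?_
    rw [intervalIntegral.integral_const_mul, integral_pow]
    simp [mul_div_assoc]
  rcases le_or_gt 0 y with hy | hy
  · simpa [abs_of_nonneg hy] using key g hg hg' h0 hb y hy
  · have hgneg : Differentiable ℝ fun z => g (-z) := hg.comp differentiable_neg
    have hder : ∀ z, deriv (fun z => g (-z)) z = -deriv g (-z) := fun z => deriv_comp_neg g z
    have hcont : Continuous (deriv fun z => g (-z)) := by
      have : (deriv fun z => g (-z)) = fun z => -deriv g (-z) := funext hder
      rw [this]; exact (hg'.comp continuous_neg).neg
    have hbneg : ∀ z, |deriv (fun z => g (-z)) z| ≤ C * |z| ^ n := by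
      intro z; rw [hder, abs_neg]
      simpa [abs_neg] using hb (-z)
    have := key (fun z => g (-z)) hgneg hcont (by simpa using h0) hbneg (-y) (by linarith)
    simpa [abs_of_neg hy] using this

set_option maxHeartbeats 2000000 in
/-- Let `u : ℝ × [0,∞) → ℝ` be smooth and odd in its first (spatial) variable,
and suppose (standing assumption) that for all `t ≥ 0`,
`x² · sup_y |∂₁³u(y,t)| ≤ −∂₁u(0,t)`.  Let `φ(y,t)` be the solution of the ODE
`φ(y,0) = y`, `∂_tφ(y,t) = u(φ(y,t), t)`, depending smoothly on the initial datum `y`.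
Then for all `t ≥ 0` the second spatial derivative satisfies
`|∂_{xx}φ(x,t)| ≤ |x| · ∫₀ᵗ sup|∂₁³u(·,s)| ds`. -/
theorem ode_flow_second_derivative_bound
    (u : ℝ → ℝ → ℝ)
    (hu_smooth : ContDiff ℝ (⊤ : ℕ∞) (fun p : ℝ × ℝ => u p.1 p.2))
    (hu_odd : ∀ y t : ℝ, u (-y) t = -u y t)
    (hbdd : ∀ t : ℝ, BddAbove (Set.range fun y => |iteratedDeriv 3 (fun z => u z t) y|))
    (x : ℝ)
    (hstanding : ∀ t : ℝ, 0 ≤ t →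
      x ^ 2 * (⨆ y : ℝ, |iteratedDeriv 3 (fun z => u z t) y|) ≤ -(deriv (fun z => u z t) 0))
    (φ : ℝ → ℝ → ℝ)
    (hφ_smooth : ContDiff ℝ (⊤ : ℕ∞) (fun p : ℝ × ℝ => φ p.1 p.2))
    (hφ0 : ∀ y : ℝ, φ y 0 = y)
    (hφode : ∀ (y t : ℝ), 0 ≤ t → HasDerivAt (φ y) (u (φ y t) t) t) :
    ∀ t : ℝ, 0 ≤ t →
      |iteratedDeriv 2 (fun y => φ y t) x|
        ≤ |x| * ∫ s in (0:ℝ)..t, (⨆ y : ℝ, |iteratedDeriv 3 (fun z => u z s) y|) := by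
  intro t₀ ht₀
  set U : ℝ × ℝ → ℝ := fun p => u p.1 p.2 with hUdef
  set Φ : ℝ × ℝ → ℝ := fun p => φ p.1 p.2 with hΦdef
  set U1 : ℝ × ℝ → ℝ := fun p => fderiv ℝ U p (1, 0) with hU1def
  set U2 : ℝ × ℝ → ℝ := fun p => fderiv ℝ U1 p (1, 0) with hU2def
  set U3 : ℝ × ℝ → ℝ := fun p => fderiv ℝ U2 p (1, 0) with hU3def
  set P1 : ℝ × ℝ → ℝ := fun p => fderiv ℝ Φ p (1, 0) with hP1def
  set P2 : ℝ × ℝ → ℝ := fun p => fderiv ℝ P1 p (1, 0) with hP2def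
  have hU1s : ContDiff ℝ (⊤ : ℕ∞) U1 := contDiff_fderiv_apply hu_smooth (1, 0)
  have hU2s : ContDiff ℝ (⊤ : ℕ∞) U2 := contDiff_fderiv_apply hU1s (1, 0)
  have hU3s : ContDiff ℝ (⊤ : ℕ∞) U3 := contDiff_fderiv_apply hU2s (1, 0)
  have hP1s : ContDiff ℝ (⊤ : ℕ∞) P1 := contDiff_fderiv_apply hφ_smooth (1, 0)
  have hP2s : ContDiff ℝ (⊤ : ℕ∞) P2 := contDiff_fderiv_apply hP1s (1, 0)
  -- pointwise spatial derivatives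
  have hud : ∀ y s : ℝ, HasDerivAt (fun z => u z s) (U1 (y, s)) y := fun y s =>
    hasDerivAt_fst_param (hu_smooth.differentiable (by simp)) y s
  have hu1d : ∀ y s : ℝ, HasDerivAt (fun z => U1 (z, s)) (U2 (y, s)) y := fun y s =>
    hasDerivAt_fst_param (hU1s.differentiable (by simp)) y s
  have hu2d : ∀ y s : ℝ, HasDerivAt (fun z => U2 (z, s)) (U3 (y, s)) y := fun y s =>
    hasDerivAt_fst_param (hU2s.differentiable (by simp)) y s
  have hφd : ∀ y s : ℝ, HasDerivAt (fun z => φ z s) (P1 (y, s)) y := fun y s =>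
    hasDerivAt_fst_param (hφ_smooth.differentiable (by simp)) y s
  have hP1d : ∀ y s : ℝ, HasDerivAt (fun z => P1 (z, s)) (P2 (y, s)) y := fun y s =>
    hasDerivAt_fst_param (hP1s.differentiable (by simp)) y s
  -- iterated derivative identifications
  have hiter3 : ∀ s y : ℝ, iteratedDeriv 3 (fun z => u z s) y = U3 (y, s) := by
    intro s y
    have e1 : deriv (fun z => u z s) = fun z => U1 (z, s) := funext fun z => (hud z s).deriv
    have e2 : deriv (fun z => U1 (z, s)) = fun z => U2 (z, s) := funext fun z => (hu1d z s).deriv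
    have e3 : deriv (fun z => U2 (z, s)) = fun z => U3 (z, s) := funext fun z => (hu2d z s).deriv
    rw [show (3 : ℕ) = 2 + 1 from rfl, iteratedDeriv_succ, show (2 : ℕ) = 1 + 1 from rfl,
      iteratedDeriv_succ, iteratedDeriv_one, e1, e2, e3]
  set S : ℝ → ℝ := fun s => ⨆ y : ℝ, |iteratedDeriv 3 (fun z => u z s) y| with hSdef
  have hS_ge : ∀ s y : ℝ, |U3 (y, s)| ≤ S s := by
    intro s y
    rw [← hiter3 s y]
    exact le_ciSup (hbdd s) y
  have hS_nonneg : ∀ s : ℝ, 0 ≤ S s := fun s => (abs_nonneg _).trans (hS_ge s 0)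
  set a : ℝ → ℝ := fun s => U1 (0, s) with hadef
  have hstand' : ∀ s : ℝ, 0 ≤ s → x ^ 2 * S s ≤ -a s := by
    intro s hs
    have e1 : deriv (fun z => u z s) 0 = U1 (0, s) := (hud 0 s).deriv
    have := hstanding s hs
    rw [e1] at this
    exact this
  have ha_nonpos : ∀ s : ℝ, 0 ≤ s → a s ≤ 0 := by
    intro s hs
    have h1 := hstand' s hs
    nlinarith [hS_nonneg s, sq_nonneg x]
  have hiter2u : ∀ s y : ℝ, iteratedDeriv 2 (fun z => u z s) y = U2 (y, s) := by
    intro s y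
    have e1 : deriv (fun z => u z s) = fun z => U1 (z, s) := funext fun z => (hud z s).deriv
    have e2 : deriv (fun z => U1 (z, s)) = fun z => U2 (z, s) := funext fun z => (hu1d z s).deriv
    rw [show (2 : ℕ) = 1 + 1 from rfl, iteratedDeriv_succ, iteratedDeriv_one, e1, e2]
  -- oddness consequences
  have hu0 : ∀ s : ℝ, u 0 s = 0 := by
    intro s; have := hu_odd 0 s; simp at this; linarith
  have hU2zero : ∀ s : ℝ, U2 (0, s) = 0 := by
    intro s
    have h1 : iteratedDeriv 2 (fun z => u (-z) s) 0
        = (-1 : ℝ) ^ 2 • iteratedDeriv 2 (fun z => u z s) (-0) :=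
      iteratedDeriv_comp_neg 2 (fun z => u z s) 0
    have h2 : (fun z => u (-z) s) = fun z => -(u z s) := funext fun z => hu_odd z s
    rw [h2, show (fun z => -u z s) = -(fun z => u z s) from rfl, iteratedDeriv_neg] at h1
    simp only [neg_zero, even_two, Even.neg_one_pow, one_smul] at h1
    have h3 := hiter2u s 0
    linarith [h1, h3.symm]
  -- Taylor-type estimates
  have habs2 : ∀ y s : ℝ, |U2 (y, s)| ≤ S s * |y| := by
    intro y s
    have h := convex_univ.norm_image_sub_le_of_norm_hasDerivWithin_le
      (f := fun z => U2 (z, s)) (f' := fun z => U3 (z, s))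
      (fun z _ => (hu2d z s).hasDerivWithinAt)
      (fun z _ => by simpa [Real.norm_eq_abs] using hS_ge s z)
      (Set.mem_univ (0 : ℝ)) (Set.mem_univ y)
    simpa [Real.norm_eq_abs, hU2zero s] using h
  have habs1 : ∀ y s : ℝ, |U1 (y, s) - a s| ≤ S s * |y| ^ 2 / 2 := by
    intro y s
    have hder : ∀ z : ℝ, HasDerivAt (fun z => U1 (z, s) - a s) (U2 (z, s)) z :=
      fun z => (hu1d z s).sub_const (a s)
    have hderg : deriv (fun z => U1 (z, s) - a s) = fun z => U2 (z, s) :=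
      funext fun z => (hder z).deriv
    have h := abs_le_pow_of_abs_deriv_le (g := fun z => U1 (z, s) - a s) (C := S s) (n := 1)
      (fun z => (hder z).differentiableAt)
      (by rw [hderg]; exact hU2s.continuous.comp (continuous_id.prodMk continuous_const))
      (by simp only [hadef]; ring)
      (fun z => by rw [hderg]; simpa using habs2 z s) y
    norm_num at h
    rwa [sq_abs]
  have habs1' : ∀ y s : ℝ, |U1 (y, s) - a s| ≤ S s * y ^ 2 / 2 := by
    intro y s
    have := habs1 y s
    rwa [show |y| ^ 2 = y ^ 2 by rw [sq_abs]] at this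
  have habs0 : ∀ y s : ℝ, |u y s - a s * y| ≤ S s * |y| ^ 3 / 6 := by
    intro y s
    have hder : ∀ z : ℝ, HasDerivAt (fun z => u z s - a s * z) (U1 (z, s) - a s) z := by
      intro z
      have := (hud z s).sub ((hasDerivAt_id z).const_mul (a s))
      rw [mul_one] at this; exact this
    have hderg : deriv (fun z => u z s - a s * z) = fun z => U1 (z, s) - a s :=
      funext fun z => (hder z).deriv
    have h := abs_le_pow_of_abs_deriv_le (g := fun z => u z s - a s * z) (C := S s / 2) (n := 2)
      (fun z => (hder z).differentiableAt)
      (by rw [hderg]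
          exact ((hU1s.continuous.comp (continuous_id.prodMk continuous_const)).sub
            continuous_const))
      (by simp [hu0 s])
      (fun z => by rw [hderg]; have := habs1 z s; linarith) y
    norm_num at h
    linarith
  -- flow bound
  have hφxcont : ∀ w : ℝ, Continuous (fun s => φ w s) := fun w =>
    hφ_smooth.continuous.comp (continuous_const.prodMk continuous_id)
  have hflow : ∀ s ∈ Set.Icc (0:ℝ) t₀, |φ x s| ≤ |x| := by
    rcases eq_or_ne x 0 with hx0 | hx0
    · subst hx0
      intro s hs
      obtain ⟨R, hR⟩ := isCompact_Icc.exists_bound_of_continuousOn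
        ((hφxcont 0).continuousOn : ContinuousOn (fun s => φ 0 s) (Set.Icc 0 t₀))
      have hR0 : (0:ℝ) ≤ R := le_trans (norm_nonneg _) (hR 0 ⟨le_refl 0, ht₀⟩)
      obtain ⟨K, hK⟩ := (isCompact_Icc.prod isCompact_Icc).exists_bound_of_continuousOn
        (hU1s.continuous.continuousOn :
          ContinuousOn U1 (Set.Icc (-R) R ×ˢ Set.Icc (0:ℝ) t₀))
      have bound : ∀ τ ∈ Set.Ico (0:ℝ) t₀,
          ‖u (φ 0 τ) τ‖ ≤ (max K 0) * ‖φ 0 τ‖ + 0 := by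
        intro τ hτ
        have hmemt : τ ∈ Set.Icc (0:ℝ) t₀ := ⟨hτ.1, hτ.2.le⟩
        have habs := hR τ hmemt
        rw [Real.norm_eq_abs] at habs
        have hmem : φ 0 τ ∈ Set.Icc (-R) R := by
          rcases abs_le.mp habs with ⟨h1, h2⟩
          exact ⟨h1, h2⟩
        have h0mem : (0:ℝ) ∈ Set.Icc (-R) R := ⟨by linarith, hR0⟩
        have h := (convex_Icc (-R) R).norm_image_sub_le_of_norm_hasDerivWithin_le
          (f := fun w => u w τ) (f' := fun w => U1 (w, τ))
          (fun w _ => (hud w τ).hasDerivWithinAt)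
          (fun w hw => le_trans (hK (w, τ) ⟨hw, hmemt⟩) (le_max_left K 0))
          h0mem hmem
        simpa [hu0 τ] using h
      have key := norm_le_gronwallBound_of_norm_deriv_right_le
        (f := fun s => φ 0 s) (f' := fun s => u (φ 0 s) s)
        (δ := 0) (K := max K 0) (ε := 0) (a := 0) (b := t₀)
        (hφxcont 0).continuousOn
        (fun τ hτ => (hφode 0 τ hτ.1).hasDerivWithinAt)
        (by simp [hφ0]) bound s hs
      rw [gronwallBound_ε0_δ0] at key
      rw [Real.norm_eq_abs] at key
      simpa using key
    · have hx2 : 0 < x ^ 2 := by positivity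
      have main : ∀ ε : ℝ, 0 < ε → ε * (1 + t₀) ≤ x ^ 2 →
          ∀ s ∈ Set.Icc (0:ℝ) t₀, (φ x s) ^ 2 ≤ x ^ 2 + ε * (1 + s) := by
        intro ε hε hεt
        have hB : ∀ τ : ℝ, HasDerivAt (fun s => x ^ 2 + ε * (1 + s)) ε τ := by
          intro τ
          have := (((hasDerivAt_id τ).const_add (1:ℝ)).const_mul ε).const_add (x ^ 2)
          simpa using this
        have hf' : ∀ τ ∈ Set.Ico (0:ℝ) t₀, HasDerivWithinAt (fun s => (φ x s) ^ 2)
            (2 * φ x τ * u (φ x τ) τ) (Set.Ici τ) τ := by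
          intro τ hτ
          have h := (hφode x τ hτ.1).pow 2
          have h' : HasDerivAt (fun s => (φ x s) ^ 2) (2 * φ x τ * u (φ x τ) τ) τ := by
            refine h.congr_deriv ?_
            push_cast
            ring
          exact h'.hasDerivWithinAt
        have bound : ∀ τ ∈ Set.Ico (0:ℝ) t₀,
            (φ x τ) ^ 2 = x ^ 2 + ε * (1 + τ) → 2 * φ x τ * u (φ x τ) τ < ε := by
          intro τ hτ heq
          set y := φ x τ with hy
          have hy2_lower : x ^ 2 ≤ y ^ 2 := by nlinarith [hτ.1, hε]
          have hy2_upper : y ^ 2 ≤ 2 * x ^ 2 := by nlinarith [hτ.2.le, hε, hεt]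
          have habs := habs0 y τ
          have hstep1 : y * u y τ ≤ a τ * y ^ 2 + S τ * (y ^ 2) ^ 2 / 6 := by
            have h1 : y * (u y τ - a τ * y) ≤ |y| * |u y τ - a τ * y| := by
              calc y * (u y τ - a τ * y) ≤ |y * (u y τ - a τ * y)| := le_abs_self _
                _ = |y| * |u y τ - a τ * y| := abs_mul _ _
            have h2 : |y| * |u y τ - a τ * y| ≤ |y| * (S τ * |y| ^ 3 / 6) :=
              mul_le_mul_of_nonneg_left habs (abs_nonneg y)
            have h4 : |y| * (S τ * |y| ^ 3 / 6) = S τ * (y ^ 2) ^ 2 / 6 := by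
              have h5 : |y| * |y| ^ 3 = (y ^ 2) ^ 2 := by
                rw [show |y| * |y| ^ 3 = (|y| ^ 2) ^ 2 from by ring, sq_abs]
              calc |y| * (S τ * |y| ^ 3 / 6) = S τ * (|y| * |y| ^ 3) / 6 := by ring
                _ = S τ * (y ^ 2) ^ 2 / 6 := by rw [h5]
            nlinarith [h1, h2, h4]
          have hstep2 : S τ * (y ^ 2) ^ 2 ≤ 2 * (-a τ) * y ^ 2 := by
            have hSy : 0 ≤ S τ * y ^ 2 := mul_nonneg (hS_nonneg τ) (sq_nonneg y)
            have h6 : S τ * (y ^ 2) ^ 2 ≤ S τ * y ^ 2 * (2 * x ^ 2) := by nlinarith [hSy]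
            have h7 : S τ * y ^ 2 * (2 * x ^ 2) = 2 * (x ^ 2 * S τ) * y ^ 2 := by ring
            have h8 : 2 * (x ^ 2 * S τ) * y ^ 2 ≤ 2 * (-a τ) * y ^ 2 := by
              nlinarith [hstand' τ hτ.1, sq_nonneg y]
            linarith [h6, h7 ▸ h6, h8]
          have hay : a τ * y ^ 2 ≤ 0 := by
            nlinarith [ha_nonpos τ hτ.1, sq_nonneg y]
          nlinarith [hstep1, hstep2, hay, hε]
        exact fun s hs => image_le_of_deriv_right_lt_deriv_boundary
          ((hφxcont x).pow 2).continuousOn hf'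
          (by show (φ x 0) ^ 2 ≤ x ^ 2 + ε * (1 + 0); rw [hφ0]; nlinarith [hε]) hB bound hs
      intro s hs
      by_contra hgt
      push_neg at hgt
      have h2 : x ^ 2 < (φ x s) ^ 2 := by
        nlinarith [abs_nonneg x, sq_abs x, sq_abs (φ x s)]
      have ht1 : (0:ℝ) < 1 + t₀ := by linarith
      have hex : ∃ ε : ℝ, 0 < ε ∧ ε * (1 + t₀) ≤ x ^ 2 ∧
          ε * (1 + t₀) ≤ ((φ x s) ^ 2 - x ^ 2) / 2 := by
        refine ⟨min (((φ x s) ^ 2 - x ^ 2) / (2 * (1 + t₀))) (x ^ 2 / (1 + t₀)),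
          lt_min (div_pos (by linarith) (by linarith)) (div_pos hx2 ht1), ?_, ?_⟩
        · rw [← le_div_iff₀ ht1]; exact min_le_right _ _
        · calc min (((φ x s) ^ 2 - x ^ 2) / (2 * (1 + t₀))) (x ^ 2 / (1 + t₀)) * (1 + t₀)
              ≤ (((φ x s) ^ 2 - x ^ 2) / (2 * (1 + t₀))) * (1 + t₀) :=
                mul_le_mul_of_nonneg_right (min_le_left _ _) (by linarith)
            _ = ((φ x s) ^ 2 - x ^ 2) / 2 := by field_simp
      obtain ⟨ε, hεpos, hεt, hεb⟩ := hex
      have happ := main ε hεpos hεt s hs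
      have hεs : ε * (1 + s) ≤ ε * (1 + t₀) :=
        mul_le_mul_of_nonneg_left (by linarith [hs.2]) hεpos.le
      linarith
  -- time evolution of P1 and P2
  have hP1ode : ∀ y s : ℝ, 0 ≤ s →
      HasDerivAt (fun τ => P1 (y, τ)) (U1 (φ y s, s) * P1 (y, s)) s := by
    intro y s hs
    have hc := clairaut_aux hφ_smooth y s
    have hinner : ∀ z : ℝ, fderiv ℝ Φ (z, s) (0, 1) = u (φ z s) s := by
      intro z
      have hA : HasDerivAt (fun τ => Φ (z, τ)) (fderiv ℝ Φ (z, s) (0, 1)) s :=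
        hasDerivAt_snd_param (hφ_smooth.differentiable (by simp)) z s
      exact hA.unique (hφode z s hs)
    have hval : deriv (fun z => fderiv ℝ Φ (z, s) (0, 1)) y = U1 (φ y s, s) * P1 (y, s) := by
      have he : (fun z => fderiv ℝ Φ (z, s) (0, 1)) = fun z => u (φ z s) s := funext hinner
      rw [he]
      have hcomp : HasDerivAt (fun z => u (φ z s) s) (U1 (φ y s, s) * P1 (y, s)) y := by
        have := (hud (φ y s) s).comp y (hφd y s)
        exact this
      exact hcomp.deriv
    rw [hval] at hc
    exact hc
  have hP2ode : ∀ s : ℝ, 0 ≤ s →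
      HasDerivAt (fun τ => P2 (x, τ))
        (U2 (φ x s, s) * P1 (x, s) ^ 2 + U1 (φ x s, s) * P2 (x, s)) s := by
    intro s hs
    have hc := clairaut_aux hP1s x s
    have hinner : ∀ z : ℝ, fderiv ℝ P1 (z, s) (0, 1) = U1 (φ z s, s) * P1 (z, s) := by
      intro z
      have hA : HasDerivAt (fun τ => P1 (z, τ)) (fderiv ℝ P1 (z, s) (0, 1)) s :=
        hasDerivAt_snd_param (hP1s.differentiable (by simp)) z s
      exact hA.unique (hP1ode z s hs)
    have hval : deriv (fun z => fderiv ℝ P1 (z, s) (0, 1)) x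
        = U2 (φ x s, s) * P1 (x, s) ^ 2 + U1 (φ x s, s) * P2 (x, s) := by
      have he : (fun z => fderiv ℝ P1 (z, s) (0, 1)) = fun z => U1 (φ z s, s) * P1 (z, s) :=
        funext hinner
      rw [he]
      have h1 : HasDerivAt (fun z => U1 (φ z s, s)) (U2 (φ x s, s) * P1 (x, s)) x := by
        have := (hu1d (φ x s) s).comp x (hφd x s)
        exact this
      have hmul := h1.mul (hP1d x s)
      have h2 : HasDerivAt (fun z => U1 (φ z s, s) * P1 (z, s))
          (U2 (φ x s, s) * P1 (x, s) ^ 2 + U1 (φ x s, s) * P2 (x, s)) x := by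
        refine hmul.congr_deriv ?_
        ring
      exact h2.deriv
    rw [hval] at hc
    exact hc
  have hP1zero : ∀ y : ℝ, P1 (y, 0) = 1 := by
    intro y
    have hid : (fun z => φ z 0) = fun z => z := funext hφ0
    have h := hφd y 0
    rw [hid] at h
    exact h.unique (hasDerivAt_id y)
  have hP2zero : P2 (x, 0) = 0 := by
    have hconst : (fun z => P1 (z, 0)) = fun _ => (1:ℝ) := funext hP1zero
    have h := hP1d x 0
    rw [hconst] at h
    exact h.unique (hasDerivAt_const x 1)
  -- integrating factor machinery
  have hαc : Continuous (fun s => U1 (φ x s, s)) :=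
    hU1s.continuous.comp ((hφxcont x).prodMk continuous_id)
  have hβc : Continuous (fun s => U2 (φ x s, s) * P1 (x, s) ^ 2) :=
    (hU2s.continuous.comp ((hφxcont x).prodMk continuous_id)).mul
      ((hP1s.continuous.comp (continuous_const.prodMk continuous_id)).pow 2)
  have hα_nonpos : ∀ s ∈ Set.Icc (0:ℝ) t₀, U1 (φ x s, s) ≤ 0 := by
    intro s hs
    have h1 := habs1' (φ x s) s
    have hfl := hflow s hs
    have h2 : (φ x s) ^ 2 ≤ x ^ 2 := by
      nlinarith [mul_le_mul hfl hfl (abs_nonneg (φ x s)) (abs_nonneg x), sq_abs x,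
        sq_abs (φ x s)]
    have h3 := hstand' s hs.1
    have h4 := ha_nonpos s hs.1
    have h5 := hS_nonneg s
    have h6 : S s * (φ x s) ^ 2 ≤ S s * x ^ 2 := mul_le_mul_of_nonneg_left h2 h5
    have h7 := (abs_le.mp h1).2
    nlinarith [h7, h6, h3, h4]
  set I : ℝ → ℝ := fun s => ∫ σ in (0:ℝ)..s, U1 (φ x σ, σ) with hIdef
  have hI : ∀ s : ℝ, HasDerivAt I (U1 (φ x s, s)) s := fun s =>
    intervalIntegral.integral_hasDerivAt_right (hαc.intervalIntegrable 0 s)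
      (hαc.stronglyMeasurableAtFilter _ _) hαc.continuousAt
  have hIc : Continuous I := continuous_iff_continuousAt.mpr fun s =>
    (hI s).differentiableAt.continuousAt
  have hI0 : I 0 = 0 := intervalIntegral.integral_same
  have hInonpos : ∀ s ∈ Set.Icc (0:ℝ) t₀, I s ≤ 0 := by
    intro s hs
    have h := intervalIntegral.integral_nonneg (μ := MeasureTheory.volume)
      (f := fun σ => -U1 (φ x σ, σ)) hs.1
      (fun σ hσ => by
        have := hα_nonpos σ ⟨hσ.1, le_trans hσ.2 hs.2⟩
        show (0:ℝ) ≤ -U1 (φ x σ, σ)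
        linarith)
    rw [intervalIntegral.integral_neg] at h
    simp only [hIdef]
    linarith
  have hIts : ∀ s ∈ Set.Icc (0:ℝ) t₀, I t₀ ≤ I s := by
    intro s hs
    have hsub : I t₀ - I s = ∫ σ in s..t₀, U1 (φ x σ, σ) :=
      intervalIntegral.integral_interval_sub_left (hαc.intervalIntegrable 0 t₀)
        (hαc.intervalIntegrable 0 s)
    have h := intervalIntegral.integral_nonneg (μ := MeasureTheory.volume)
      (f := fun σ => -U1 (φ x σ, σ)) hs.2
      (fun σ hσ => by
        have := hα_nonpos σ ⟨le_trans hs.1 hσ.1, hσ.2⟩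
        show (0:ℝ) ≤ -U1 (φ x σ, σ)
        linarith)
    rw [intervalIntegral.integral_neg] at h
    linarith [hsub]
  have hP1exp : ∀ s ∈ Set.Icc (0:ℝ) t₀, P1 (x, s) = exp (I s) := by
    intro s hs
    have hder : ∀ τ ∈ Set.uIcc (0:ℝ) s,
        HasDerivAt (fun τ => exp (-I τ) * P1 (x, τ)) ((fun _ => (0:ℝ)) τ) τ := by
      intro τ hτ
      rw [Set.uIcc_of_le hs.1] at hτ
      have h2 : HasDerivAt (fun τ => exp (-I τ)) (exp (-I τ) * -U1 (φ x τ, τ)) τ :=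
        (hI τ).neg.exp
      have h3 := h2.mul (hP1ode x τ hτ.1)
      refine h3.congr_deriv ?_
      ring
    have hftc := intervalIntegral.integral_eq_sub_of_hasDerivAt hder
      (_root_.intervalIntegrable_const (c := (0:ℝ)))
    have h0 : exp (-I s) * P1 (x, s) = 1 := by
      have h1 : (0:ℝ) = exp (-I s) * P1 (x, s) - exp (-I 0) * P1 (x, 0) := by
        simpa using hftc
      rw [hI0, hP1zero x] at h1
      simp only [neg_zero, Real.exp_zero, mul_one] at h1
      linarith
    have h2 := congrArg (fun w => exp (I s) * w) h0
    simp only [← mul_assoc, ← Real.exp_add] at h2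
    simpa using h2
  have hP1le : ∀ s ∈ Set.Icc (0:ℝ) t₀, |P1 (x, s)| ≤ 1 := by
    intro s hs
    rw [hP1exp s hs, abs_of_pos (Real.exp_pos _)]
    exact Real.exp_le_one_iff.mpr (hInonpos s hs)
  have hgder : ∀ τ ∈ Set.uIcc (0:ℝ) t₀,
      HasDerivAt (fun τ => exp (-I τ) * P2 (x, τ))
        (exp (-I τ) * (U2 (φ x τ, τ) * P1 (x, τ) ^ 2)) τ := by
    intro τ hτ
    rw [Set.uIcc_of_le ht₀] at hτ
    have h2 : HasDerivAt (fun τ => exp (-I τ)) (exp (-I τ) * -U1 (φ x τ, τ)) τ :=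
      (hI τ).neg.exp
    have h3 := h2.mul (hP2ode τ hτ.1)
    refine h3.congr_deriv ?_
    ring
  have hintg : IntervalIntegrable (fun τ => exp (-I τ) * (U2 (φ x τ, τ) * P1 (x, τ) ^ 2))
      MeasureTheory.volume 0 t₀ :=
    ((Real.continuous_exp.comp hIc.neg).mul hβc).intervalIntegrable 0 t₀
  have hftc := intervalIntegral.integral_eq_sub_of_hasDerivAt hgder hintg
  have hP2form : P2 (x, t₀)
      = exp (I t₀) * ∫ τ in (0:ℝ)..t₀, exp (-I τ) * (U2 (φ x τ, τ) * P1 (x, τ) ^ 2) := by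
    rw [hftc]
    simp only [hP2zero, mul_zero, sub_zero]
    rw [← mul_assoc, ← Real.exp_add]
    simp
  have hiter2goal : iteratedDeriv 2 (fun y => φ y t₀) x = P2 (x, t₀) := by
    have e1 : deriv (fun z => φ z t₀) = fun z => P1 (z, t₀) := funext fun z => (hφd z t₀).deriv
    rw [show (2:ℕ) = 1 + 1 from rfl, iteratedDeriv_succ, iteratedDeriv_one, e1]
    exact (hP1d x t₀).deriv
  rw [hiter2goal]
  have hbound1 : |P2 (x, t₀)| ≤ ∫ τ in (0:ℝ)..t₀,
      exp (I t₀) * |exp (-I τ) * (U2 (φ x τ, τ) * P1 (x, τ) ^ 2)| := by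
    rw [hP2form, abs_mul, abs_of_pos (Real.exp_pos _)]
    have hnorm : |∫ τ in (0:ℝ)..t₀, exp (-I τ) * (U2 (φ x τ, τ) * P1 (x, τ) ^ 2)|
        ≤ ∫ τ in (0:ℝ)..t₀, |exp (-I τ) * (U2 (φ x τ, τ) * P1 (x, τ) ^ 2)| := by
      simpa only [Real.norm_eq_abs] using
        intervalIntegral.norm_integral_le_integral_norm (μ := MeasureTheory.volume)
          (f := fun τ => exp (-I τ) * (U2 (φ x τ, τ) * P1 (x, τ) ^ 2)) ht₀
    calc exp (I t₀) * |∫ τ in (0:ℝ)..t₀, exp (-I τ) * (U2 (φ x τ, τ) * P1 (x, τ) ^ 2)|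
        ≤ exp (I t₀) * ∫ τ in (0:ℝ)..t₀, |exp (-I τ) * (U2 (φ x τ, τ) * P1 (x, τ) ^ 2)| :=
          mul_le_mul_of_nonneg_left hnorm (Real.exp_pos _).le
      _ = ∫ τ in (0:ℝ)..t₀, exp (I t₀) * |exp (-I τ) * (U2 (φ x τ, τ) * P1 (x, τ) ^ 2)| :=
          (intervalIntegral.integral_const_mul _ _).symm
  have hpoint : ∀ τ ∈ Set.Icc (0:ℝ) t₀,
      exp (I t₀) * |exp (-I τ) * (U2 (φ x τ, τ) * P1 (x, τ) ^ 2)| ≤ S τ * |x| := by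
    intro τ hτ
    rw [abs_mul, abs_of_pos (Real.exp_pos _), ← mul_assoc, ← Real.exp_add]
    have hfac : exp (I t₀ + -I τ) ≤ 1 :=
      Real.exp_le_one_iff.mpr (by linarith [hIts τ hτ])
    have hQ : |U2 (φ x τ, τ) * P1 (x, τ) ^ 2| ≤ S τ * |x| := by
      rw [abs_mul]
      have e1 : |P1 (x, τ) ^ 2| ≤ 1 := by
        rw [abs_pow]
        exact pow_le_one₀ (abs_nonneg _) (hP1le τ hτ)
      have e2 : |U2 (φ x τ, τ)| ≤ S τ * |x| :=
        (habs2 _ τ).trans (mul_le_mul_of_nonneg_left (hflow τ hτ) (hS_nonneg τ))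
      calc |U2 (φ x τ, τ)| * |P1 (x, τ) ^ 2| ≤ (S τ * |x|) * 1 :=
            mul_le_mul e2 e1 (abs_nonneg _) (mul_nonneg (hS_nonneg τ) (abs_nonneg x))
        _ = S τ * |x| := mul_one _
    calc exp (I t₀ + -I τ) * |U2 (φ x τ, τ) * P1 (x, τ) ^ 2|
        ≤ 1 * |U2 (φ x τ, τ) * P1 (x, τ) ^ 2| :=
          mul_le_mul_of_nonneg_right hfac (abs_nonneg _)
      _ = |U2 (φ x τ, τ) * P1 (x, τ) ^ 2| := one_mul _
      _ ≤ S τ * |x| := hQ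
  rcases eq_or_ne x 0 with hx0 | hx0
  · subst hx0
    have hzero : Set.EqOn (fun τ => exp (-I τ) * (U2 (φ 0 τ, τ) * P1 (0, τ) ^ 2))
        (fun _ => (0:ℝ)) (Set.uIcc (0:ℝ) t₀) := by
      intro τ hτ
      rw [Set.uIcc_of_le ht₀] at hτ
      have h1 : |φ 0 τ| ≤ |(0:ℝ)| := hflow τ hτ
      have h2 : φ 0 τ = 0 := by
        simpa [abs_nonpos_iff] using h1
      simp [h2, hU2zero τ]
    have hzint : (∫ τ in (0:ℝ)..t₀, exp (-I τ) * (U2 (φ 0 τ, τ) * P1 (0, τ) ^ 2)) = 0 := by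
      rw [intervalIntegral.integral_congr hzero]
      simp
    rw [hP2form, hzint, mul_zero, abs_zero]
    simp
  · have hx2 : 0 < x ^ 2 := by positivity
    have hSlsc : LowerSemicontinuous S := by
      intro s r hr
      obtain ⟨y, hy⟩ := exists_lt_of_lt_ciSup hr
      rw [hiter3 s y] at hy
      have hcont : Continuous fun σ => |U3 (y, σ)| :=
        (hU3s.continuous.comp (continuous_const.prodMk continuous_id)).abs
      filter_upwards [hcont.continuousAt.preimage_mem_nhds (Ioi_mem_nhds hy)] with σ hσ
      exact lt_of_lt_of_le hσ (hS_ge σ y)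
    have hSmeas := hSlsc.measurable
    have hSint : IntervalIntegrable S MeasureTheory.volume 0 t₀ := by
      rw [intervalIntegrable_iff_integrableOn_Ioc_of_le ht₀]
      have hac : Continuous fun σ => -U1 (0, σ) / x ^ 2 :=
        ((hU1s.continuous.comp (continuous_const.prodMk continuous_id)).neg).div_const _
      refine MeasureTheory.Integrable.mono' hac.integrableOn_Ioc
        hSmeas.aestronglyMeasurable ?_
      refine MeasureTheory.ae_restrict_of_forall_mem measurableSet_Ioc ?_
      intro σ hσ
      rw [Real.norm_eq_abs, abs_of_nonneg (hS_nonneg σ)]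
      rw [le_div_iff₀ hx2]
      have h3 := hstand' σ hσ.1.le
      nlinarith [h3]
    have hSxint : IntervalIntegrable (fun σ => S σ * |x|) MeasureTheory.volume 0 t₀ :=
      hSint.mul_const _
    have hlhsint : IntervalIntegrable
        (fun τ => exp (I t₀) * |exp (-I τ) * (U2 (φ x τ, τ) * P1 (x, τ) ^ 2)|)
        MeasureTheory.volume 0 t₀ :=
      (continuous_const.mul ((Real.continuous_exp.comp hIc.neg).mul hβc).abs).intervalIntegrable 0 t₀
    have hmono := intervalIntegral.integral_mono_on ht₀ hlhsint hSxint hpoint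
    have hfinal : (∫ τ in (0:ℝ)..t₀, S τ * |x|) = |x| * ∫ τ in (0:ℝ)..t₀, S τ := by
      rw [intervalIntegral.integral_mul_const]
      ring
    calc |P2 (x, t₀)| ≤ ∫ τ in (0:ℝ)..t₀,
          exp (I t₀) * |exp (-I τ) * (U2 (φ x τ, τ) * P1 (x, τ) ^ 2)| := hbound1
      _ ≤ ∫ τ in (0:ℝ)..t₀, S τ * |x| := hmono
      _ = |x| * ∫ τ in (0:ℝ)..t₀, S τ := hfinal
end

section
/- Let i ∈ {1,3}, let g be a continuous function of t only, and set G(t) = exp ∫_t^1 g(s) ds. Suppose ω_i is a smooth scalar function on ℝ³ × [t₀,1], odd in the variable x_i at each time, solving the transport equation ∂_tω_i + U·∇ω_i = ω_i ∂_iU_i + g(t) ω_i. Then for every (x,t) for which the flow s ↦ φ(x,t,s) exists on [t,1], one has G(t) φ_i(x,t,1) ω_i(x,t) = x_i ω_i(φ(x,t,1),1); equivalently, the quantity e^{∫ g} · ω_i/x_i is conserved along flow lines. -/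
open Real intervalIntegral

noncomputable section

/-- The partial derivative of `F : ℝ³ → ℝ` in the `i`-th coordinate direction. -/
def pd3 (i : Fin 3) (F : (Fin 3 → ℝ) → ℝ) (x : Fin 3 → ℝ) : ℝ :=
  fderiv ℝ F x (Pi.single i 1)

/-- Partial derivative in a space direction equals the full Fréchet derivative applied
to the corresponding direction. -/
lemma aux_pd3 (F : (Fin 3 → ℝ) × ℝ → ℝ) (hF : Differentiable ℝ F)
    (x : Fin 3 → ℝ) (s : ℝ) (j : Fin 3) :
    pd3 j (fun y => F (y, s)) x = fderiv ℝ F (x, s) (Pi.single j 1, 0) := by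
  have h : HasFDerivAt (fun y : Fin 3 → ℝ => F (y, s))
      ((fderiv ℝ F (x, s)).comp (ContinuousLinearMap.inl ℝ (Fin 3 → ℝ) ℝ)) x :=
    (hF (x, s)).hasFDerivAt.comp x (hasFDerivAt_prodMk_left x s)
  rw [pd3, h.fderiv]
  simp

/-- Time derivative equals the full Fréchet derivative applied to `(0,1)`. -/
lemma aux_derivt (F : (Fin 3 → ℝ) × ℝ → ℝ) (hF : Differentiable ℝ F)
    (x : Fin 3 → ℝ) (s : ℝ) :
    HasDerivAt (fun r => F (x, r)) (fderiv ℝ F (x, s) (0, 1)) s := by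
  have hp : HasDerivAt (fun r : ℝ => ((x : Fin 3 → ℝ), r)) ((0 : Fin 3 → ℝ), (1 : ℝ)) s :=
    (hasDerivAt_const s x).prodMk (hasDerivAt_id s)
  exact (hF (x, s)).hasFDerivAt.comp_hasDerivAt s hp

/-- Decomposition of the space-part of the Fréchet derivative as a sum of partials. -/
lemma aux_sum (F : (Fin 3 → ℝ) × ℝ → ℝ) (hF : Differentiable ℝ F)
    (x : Fin 3 → ℝ) (s : ℝ) (v : Fin 3 → ℝ) :
    fderiv ℝ F (x, s) (v, 0) = ∑ j : Fin 3, v j * pd3 j (fun y => F (y, s)) x := by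
  have hv : ((v, (0 : ℝ)) : (Fin 3 → ℝ) × ℝ)
      = ∑ j : Fin 3, v j • ((Pi.single j 1 : Fin 3 → ℝ), (0 : ℝ)) := by
    refine Prod.ext ?_ ?_
    · simp only [Prod.fst_sum, Prod.smul_mk]
      funext k
      simp [Finset.sum_apply, Pi.single_apply]
    · simp [Prod.snd_sum]
  rw [hv, map_sum]
  refine Finset.sum_congr rfl fun j _ => ?_
  rw [aux_pd3 F hF x s j, map_smul]
  simp [smul_eq_mul]

set_option maxHeartbeats 1000000 in
set_option synthInstance.maxHeartbeats 200000 in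
/-- transport of `ω_i/x_i`, Lemma 3.4 of the paper.
`U(x,t) = (x₁∂₁U₁(0,x₂,0,t), U₂(0,x₂,0,t), x₃∂₃U₃(0,x₂,0,t))` is a smooth, polar,
divergence-free velocity field on `ℝ³` (coordinates indexed `0,1,2`).  Let `i ∈ {1,3}`
(`i = 0` or `i = 2` in `0`-based indexing), let `g` be a continuous function of `t` only and
`G(t) = exp ∫ₜ¹ g`.  Suppose `ω_i` is smooth on `ℝ³ × [t₀,1]`, odd in the variable `x_i` at
each time, and solves `∂_tω_i + U·∇ω_i = ω_i ∂_iU_i + g(t) ω_i`.  Then along every flow line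
`ψ` of `U` on `[t,1]` with `ψ(t) = x` one has
`G(t) ψ(1)_i ω_i(x,t) = x_i ω_i(ψ(1),1)`, i.e. `e^{∫g}·ω_i/x_i` is conserved. -/
theorem transport_conserved_quantity
    (U : (Fin 3 → ℝ) → ℝ → (Fin 3 → ℝ))
    (hU_smooth : ContDiff ℝ (⊤ : ℕ∞) (fun p : (Fin 3 → ℝ) × ℝ => U p.1 p.2))
    (hU_polar : ∀ (x : Fin 3 → ℝ) (s : ℝ) (j : Fin 3),
      U (Function.update x j (-(x j))) s j = -(U x s j))
    (hU_div : ∀ (x : Fin 3 → ℝ) (s : ℝ), (∑ j : Fin 3, pd3 j (fun y => U y s j) x) = 0)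
    (hU_form : ∀ (x : Fin 3 → ℝ) (s : ℝ),
      U x s = ![x 0 * pd3 0 (fun y => U y s 0) ![0, x 1, 0],
                U ![0, x 1, 0] s 1,
                x 2 * pd3 2 (fun y => U y s 2) ![0, x 1, 0]])
    (i : Fin 3) (hi : i = 0 ∨ i = 2)
    (g : ℝ → ℝ) (hg : Continuous g)
    (t₀ : ℝ) (ht₀ : t₀ ≤ 1)
    (ω : (Fin 3 → ℝ) → ℝ → ℝ)
    (hω_smooth : ContDiff ℝ (⊤ : ℕ∞) (fun p : (Fin 3 → ℝ) × ℝ => ω p.1 p.2))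
    (hω_odd : ∀ (x : Fin 3 → ℝ), ∀ s ∈ Set.Icc t₀ 1,
      ω (Function.update x i (-(x i))) s = -(ω x s))
    (hω_pde : ∀ (x : Fin 3 → ℝ), ∀ s ∈ Set.Icc t₀ 1,
      deriv (fun r => ω x r) s + (∑ j : Fin 3, U x s j * pd3 j (fun y => ω y s) x) =
        ω x s * pd3 i (fun y => U y s i) x + g s * ω x s)
    (x : Fin 3 → ℝ) (t : ℝ) (ht : t ∈ Set.Icc t₀ 1)
    (ψ : ℝ → Fin 3 → ℝ)
    (hψt : ψ t = x)
    (hψode : ∀ s ∈ Set.Icc t 1, HasDerivAt ψ (U (ψ s) s) s) :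
    Real.exp (∫ s in t..(1:ℝ), g s) * ψ 1 i * ω x t = x i * ω (ψ 1) 1 := by
  obtain ⟨ht₀t, ht1⟩ := ht
  have hsub : Set.Icc t 1 ⊆ Set.Icc t₀ 1 := Set.Icc_subset_Icc ht₀t le_rfl
  -- basic differentiability
  set Ω : (Fin 3 → ℝ) × ℝ → ℝ := fun p => ω p.1 p.2 with hΩ
  have hωdiff : Differentiable ℝ Ω := hω_smooth.differentiable (by simp)
  have hVsmooth : ContDiff ℝ (⊤ : ℕ∞) (fun p : (Fin 3 → ℝ) × ℝ => U p.1 p.2 i) :=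
    contDiff_pi.mp hU_smooth i
  have hVdiff : Differentiable ℝ (fun p : (Fin 3 → ℝ) × ℝ => U p.1 p.2 i) :=
    hVsmooth.differentiable (by simp)
  have hi1 : i ≠ 1 := by rcases hi with h | h <;> subst h <;> decide
  -- structure of U in direction i : U y s i = y i * ∂_i U_i (y)
  have hstruct : ∀ (y : Fin 3 → ℝ) (s : ℝ),
      U y s i = y i * pd3 i (fun z => U z s i) y := by
    intro y s
    set f : ℝ := pd3 i (fun z => U z s i) ![0, y 1, 0] with hf
    have hdiffUi : ∀ z : Fin 3 → ℝ, DifferentiableAt ℝ (fun z => U z s i) z := by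
      intro z
      exact (hVdiff (z, s)).comp z (differentiableAt_fun_id.prodMk (differentiableAt_const s) :
        DifferentiableAt ℝ (fun x : Fin 3 → ℝ => (x, s)) z)
    have hline : HasDerivAt (fun h : ℝ => y + h • (Pi.single i (1 : ℝ) : Fin 3 → ℝ))
        (Pi.single i 1) 0 := by
      have h0 : HasDerivAt (fun h : ℝ => h • (Pi.single i (1 : ℝ) : Fin 3 → ℝ))
          ((1:ℝ) • (Pi.single i (1 : ℝ) : Fin 3 → ℝ)) 0 := by
        exact HasDerivAt.smul_const (𝕜' := ℝ) (hasDerivAt_id (0 : ℝ)) _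
      simpa using h0.const_add y
    have hcomp : HasDerivAt (fun h : ℝ => U (y + h • (Pi.single i (1 : ℝ) : Fin 3 → ℝ)) s i)
        (fderiv ℝ (fun z => U z s i) y (Pi.single i 1)) 0 := by
      have h := (hdiffUi y).hasFDerivAt.comp_hasDerivAt_of_eq 0 hline (by simp)
      simpa [Function.comp_def] using h
    have hval : ∀ h : ℝ, U (y + h • (Pi.single i (1 : ℝ) : Fin 3 → ℝ)) s i = (y i + h) * f := by
      intro h
      have e1 : (y + h • (Pi.single i (1 : ℝ) : Fin 3 → ℝ)) 1 = y 1 := by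
        simp [Pi.single_apply, hi1.symm]
      have e2 : (y + h • (Pi.single i (1 : ℝ) : Fin 3 → ℝ)) i = y i + h := by simp
      rcases hi with h0 | h2
      · subst h0
        rw [hU_form]
        simp only [Matrix.cons_val_zero]
        rw [e1, e2]
      · subst h2
        rw [hU_form]
        simp only [Matrix.cons_val_two, Matrix.tail_cons, Matrix.head_cons]
        rw [e1, e2]
    have hcomp' : HasDerivAt (fun h : ℝ => (y i + h) * f)
        (fderiv ℝ (fun z => U z s i) y (Pi.single i 1)) 0 := by
      have := hcomp
      rw [funext hval] at this
      exact this
    have hsimple : HasDerivAt (fun h : ℝ => (y i + h) * f) f 0 := by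
      simpa using (((hasDerivAt_id (0 : ℝ)).const_add (y i)).mul_const f)
    have hfd : pd3 i (fun z => U z s i) y = f := by
      rw [pd3]; exact hcomp'.unique hsimple
    rw [hfd, hf]
    rcases hi with h0 | h2
    · subst h0
      conv_lhs => rw [hU_form]
      simp
    · subst h2
      conv_lhs => rw [hU_form]
      simp
  -- the coefficient of the linear ODE along the flow line
  set c : ℝ → ℝ := fun s => pd3 i (fun z => U z s i) (ψ s) with hc
  -- continuity of ψ on [t,1]
  have hψcont : ContinuousOn ψ (Set.Icc t 1) := fun s hs =>
    (hψode s hs).continuousAt.continuousWithinAt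
  -- continuity of c on [t,1]
  have hccont : ContinuousOn c (Set.Icc t 1) := by
    have heq : ∀ s, c s = (fderiv ℝ (fun p : (Fin 3 → ℝ) × ℝ => U p.1 p.2 i) (ψ s, s))
        (Pi.single i 1, 0) := fun s => aux_pd3 _ hVdiff (ψ s) s i
    have h1 : ContinuousOn (fun s => (ψ s, s)) (Set.Icc t 1) :=
      hψcont.prodMk (continuous_id.continuousOn)
    have h2 : ContinuousOn (fun s =>
        fderiv ℝ (fun p : (Fin 3 → ℝ) × ℝ => U p.1 p.2 i) (ψ s, s)) (Set.Icc t 1) :=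
      (hVsmooth.continuous_fderiv (by simp)).comp_continuousOn h1
    have h3 : ContinuousOn (fun s =>
        (fderiv ℝ (fun p : (Fin 3 → ℝ) × ℝ => U p.1 p.2 i) (ψ s, s))
        ((Pi.single i 1 : Fin 3 → ℝ), (0:ℝ))) (Set.Icc t 1) :=
      (ContinuousLinearMap.apply ℝ ℝ ((Pi.single i 1 : Fin 3 → ℝ),
        (0:ℝ))).continuous.comp_continuousOn h2
    exact (continuousOn_congr (fun s _ => heq s)).mpr h3
  -- continuous extension of c via clamping to [t,1]
  set τ : ℝ → ℝ := fun s => max t (min s 1) with hτ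
  have hτmem : ∀ s, τ s ∈ Set.Icc t 1 := by
    intro s
    constructor
    · exact le_max_left _ _
    · exact max_le ht1 (min_le_right _ _)
  have hτid : ∀ s ∈ Set.Icc t 1, τ s = s := by
    intro s hs
    rw [hτ]
    simp only [min_eq_left hs.2, max_eq_right hs.1]
  set c' : ℝ → ℝ := fun s => c (τ s) with hc'
  have hc'cont : Continuous c' :=
    hccont.comp_continuous (continuous_const.max (continuous_id.min continuous_const)) hτmem
  have hc'eq : ∀ s ∈ Set.Icc t 1, c' s = c s := fun s hs => by
    show c (τ s) = c s
    rw [hτid s hs]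
  -- antiderivatives
  set Jg : ℝ → ℝ := fun s => ∫ r in t..s, g r with hJg
  have hJg' : ∀ s, HasDerivAt Jg (g s) s := fun s =>
    (hg.integral_hasStrictDerivAt t s).hasDerivAt
  set Jc : ℝ → ℝ := fun s => ∫ r in t..s, c' r with hJc
  have hJc' : ∀ s, HasDerivAt Jc (c' s) s := fun s =>
    (hc'cont.integral_hasStrictDerivAt t s).hasDerivAt
  -- the exponential weight
  set E : ℝ → ℝ := fun s => Real.exp (Jg 1 - Jg s) with hE
  have hE' : ∀ s, HasDerivAt E (-(g s) * E s) s := by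
    intro s
    have h1 : HasDerivAt (fun r => Jg 1 - Jg r) (-(g s)) s := (hJg' s).const_sub (Jg 1)
    have := h1.exp
    simpa [hE, mul_comm] using this
  -- derivative of A(s) = ω (ψ s) s
  have hA : ∀ s ∈ Set.Icc t 1,
      HasDerivAt (fun r => ω (ψ r) r) ((c s + g s) * ω (ψ s) s) s := by
    intro s hs
    have hpair : HasDerivAt (fun r => (ψ r, r)) (U (ψ s) s, 1) s :=
      (hψode s hs).prodMk (hasDerivAt_id s)
    have h0' := (hωdiff (ψ s, s)).hasFDerivAt.comp_hasDerivAt_of_eq s hpair rfl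
    have h0 : HasDerivAt (fun r => Ω (ψ r, r))
        (fderiv ℝ Ω (ψ s, s) (U (ψ s) s, 1)) s := h0'
    have hsplit : ((U (ψ s) s, (1 : ℝ)) : (Fin 3 → ℝ) × ℝ)
        = (U (ψ s) s, (0 : ℝ)) + ((0 : Fin 3 → ℝ), (1 : ℝ)) := by
      refine Prod.ext ?_ ?_ <;> simp
    have hDt : fderiv ℝ Ω (ψ s, s) ((0 : Fin 3 → ℝ), (1:ℝ)) = deriv (fun r => ω (ψ s) r) s :=
      ((aux_derivt Ω hωdiff (ψ s) s).deriv).symm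
    have hDx : fderiv ℝ Ω (ψ s, s) (U (ψ s) s, (0:ℝ))
        = ∑ j : Fin 3, U (ψ s) s j * pd3 j (fun y => ω y s) (ψ s) :=
      aux_sum Ω hωdiff (ψ s) s (U (ψ s) s)
    have hder : fderiv ℝ Ω (ψ s, s) (U (ψ s) s, 1)
        = (c s + g s) * ω (ψ s) s := by
      rw [hsplit, map_add, hDt, hDx]
      have := hω_pde (ψ s) s (hsub hs)
      rw [hc]
      linarith [this]
    rw [hder] at h0
    exact h0
  -- derivative of B(s) = ψ s i
  have hB : ∀ s ∈ Set.Icc t 1, HasDerivAt (fun r => ψ r i) (c s * ψ s i) s := by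
    intro s hs
    have h0 : HasDerivAt (fun r => ψ r i) (U (ψ s) s i) s :=
      hasDerivAt_pi.mp (hψode s hs) i
    rw [hstruct (ψ s) s] at h0
    rw [hc]
    simpa [mul_comm] using h0
  -- the quantity P, constant on [t,1]
  set Q : ℝ → ℝ := fun s => E s * ψ 1 i * ω (ψ s) s - ψ s i * ω (ψ 1) 1 with hQ
  set P : ℝ → ℝ := fun s => Q s * Real.exp (-(Jc s)) with hP
  have hQ' : ∀ s ∈ Set.Icc t 1, HasDerivAt Q (c s * Q s) s := by
    intro s hs
    have h1 : HasDerivAt (fun r => E r * ψ 1 i * ω (ψ r) r)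
        ((-(g s) * E s) * ψ 1 i * ω (ψ s) s + E s * ψ 1 i * ((c s + g s) * ω (ψ s) s)) s :=
      ((hE' s).mul_const (ψ 1 i)).mul (hA s hs)
    have h2 : HasDerivAt (fun r => ψ r i * ω (ψ 1) 1) ((c s * ψ s i) * ω (ψ 1) 1) s :=
      (hB s hs).mul_const (ω (ψ 1) 1)
    have h3 := h1.sub h2
    have : (-(g s) * E s) * ψ 1 i * ω (ψ s) s + E s * ψ 1 i * ((c s + g s) * ω (ψ s) s)
        - (c s * ψ s i) * ω (ψ 1) 1 = c s * Q s := by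
      rw [hQ]; ring
    rw [this] at h3
    exact h3
  have hP' : ∀ s ∈ Set.Icc t 1, HasDerivAt P 0 s := by
    intro s hs
    have h1 : HasDerivAt (fun r => Real.exp (-(Jc r))) (Real.exp (-(Jc s)) * (-(c' s))) s := by
      have := ((hJc' s).neg).exp
      simpa [mul_comm] using this
    have h2 := (hQ' s hs).mul h1
    have : c s * Q s * Real.exp (-(Jc s)) + Q s * (Real.exp (-(Jc s)) * (-(c' s))) = 0 := by
      rw [hc'eq s hs]; ring
    rw [this] at h2
    exact h2
  have hPcont : ContinuousOn P (Set.Icc t 1) := fun s hs =>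
    (hP' s hs).continuousAt.continuousWithinAt
  have hPconst : ∀ s ∈ Set.Icc t 1, P s = P t := by
    intro s hs
    exact constant_of_has_deriv_right_zero hPcont
      (fun r hr => (hP' r (Set.Ico_subset_Icc_self hr)).hasDerivWithinAt) s hs
  have hkey : P 1 = P t := hPconst 1 (Set.right_mem_Icc.mpr ht1)
  have hE1 : E 1 = 1 := by
    show Real.exp (Jg 1 - Jg 1) = 1
    simp
  have hP1 : P 1 = 0 := by
    show (E 1 * ψ 1 i * ω (ψ 1) 1 - ψ 1 i * ω (ψ 1) 1) * Real.exp (-(Jc 1)) = 0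
    rw [hE1]
    ring
  have hQt : Q t = 0 := by
    have hexp : Real.exp (-(Jc t)) ≠ 0 := Real.exp_ne_zero _
    have h : Q t * Real.exp (-(Jc t)) = 0 := by
      show P t = 0
      rw [← hkey, hP1]
    exact (mul_eq_zero.mp h).resolve_right hexp
  have hEt : E t = Real.exp (∫ s in t..(1:ℝ), g s) := by
    show Real.exp (Jg 1 - Jg t) = _
    have : Jg t = 0 := intervalIntegral.integral_same
    rw [this, sub_zero]
  have hQt' : E t * ψ 1 i * ω (ψ t) t - ψ t i * ω (ψ 1) 1 = 0 := hQt
  rw [hψt, hEt] at hQt'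
  linarith [hQt']

end
end
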